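/- arXiv:2605.11057 — 7 statements merged into one kernel-verified Lean document; each statement's English description precedes it below -/
import Mathlib

section
/- With \phi : B_2 \to A_3 = S_4 given by \phi(r_1) = s_1 s_3, \phi(r_2) = s_2, the unfolding polynomial satisfies U(q) := \sum_{w \in B_2} q^{\ell_A(\phi(w))} = [2]_q [3]_{-q} [4]_q, where [k]_x = 1 + x + \dots + x^{k-1}. -/
/-!
Multiplying a permutation on the left by an adjacent transposition changes its number of
inversions by at most one, so the inversion count of the image of `w` in `S₄` is a lower bound
for `ℓ_A(w)`. The dihedral group `B₂` has the eight elements `1, r₁, r₂, r₁r₂, r₂r₁, r₁r₂r₁,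
r₂r₁r₂, r₁r₂r₁r₂`: the set is closed under left multiplication by `r₁, r₂` thanks to the braid
relation `r₂r₁r₂r₁ = r₁r₂r₁r₂`, and the elements have distinct images in `S₄`. Substituting
`s₁s₃` for `r₁` and `s₂` for `r₂` in these words gives words in `S₄` whose lengths equal the
inversion counts of their products, so they are reduced and `ℓ_A ∘ φ` takes the values
`0, 2, 1, 3, 3, 5, 4, 6`. Hence
`U(q) = 1 + q + q² + 2q³ + q⁴ + q⁵ + q⁶ = (1 + q³)(1 + q + q² + q³) = [2]_q [3]_{-q} [4]_q`.
-/

open Polynomial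

/-- The q-integer `[k]_p = 1 + p + ⋯ + p^(k-1)` evaluated at a polynomial `p`. -/
noncomputable def qint (p : Polynomial ℤ) (k : ℕ) : Polynomial ℤ := ∑ i ∈ Finset.range k, p ^ i

open Equiv Finset

theorem finsum_eq_sum_map_of_nodup {α M : Type*} [AddCommMonoid M] (f : α → M) {l : List α}
    (hl : l.Nodup) (hmem : ∀ a, a ∈ l) : ∑ᶠ a, f a = (l.map f).sum := by
  classical
  rw [finsum_eq_sum_of_support_subset (s := l.toFinset) f
    fun a _ => List.mem_toFinset.2 (hmem a), List.sum_toFinset f hl]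

namespace CoxeterSystem

variable {B W : Type*} [Group W] {M : CoxeterMatrix B} (cs : CoxeterSystem M W)

theorem lift_wordProd {G : Type*} [Monoid G] {f : B → G} (hf : M.IsLiftable f) (ω : List B) :
    cs.lift ⟨f, hf⟩ (cs.wordProd ω) = (ω.map f).prod := by
  simp [wordProd, map_list_prod, List.map_map, Function.comp_def, cs.lift_apply_simple hf]

theorem nodup_map_wordProd {G : Type*} [Monoid G] {f : B → G} (hf : M.IsLiftable f)
    {l : List (List B)} (h : (l.map fun ω => (ω.map f).prod).Nodup) :
    (l.map cs.wordProd).Nodup :=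
  List.Nodup.of_map (cs.lift ⟨f, hf⟩) (by simpa [List.map_map, Function.comp_def, lift_wordProd])

theorem map_wordProd {B' W' : Type*} [Group W'] {M' : CoxeterMatrix B'}
    (cs' : CoxeterSystem M' W') (φ : W →* W') (t : B → List B')
    (h : ∀ i, φ (cs.simple i) = cs'.wordProd (t i)) (ω : List B) :
    φ (cs.wordProd ω) = cs'.wordProd (ω.flatMap t) := by
  induction ω with
  | nil => simp
  | cons i ω ih => rw [wordProd_cons, map_mul, h, ih, List.flatMap_cons, wordProd_append]

theorem le_length_of_simple_mul_le_succ {f : W → ℕ} (hone : f 1 = 0)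
    (hs : ∀ i w, f (cs.simple i * w) ≤ f w + 1) (w : W) : f w ≤ cs.length w := by
  have hword : ∀ ω : List B, f (cs.wordProd ω) ≤ ω.length := by
    intro ω
    induction ω with
    | nil => simp [hone]
    | cons i ω ih => rw [wordProd_cons, List.length_cons]; exact (hs i _).trans (by omega)
  obtain ⟨ω, hω, rfl⟩ := cs.exists_isReduced w
  exact hω.eq ▸ hword ω

end CoxeterSystem

def adjSwap {n : ℕ} (i : Fin n) : Perm (Fin (n + 1)) := swap i.castSucc i.succ

theorem swap_mul_swap_pow_three {α : Type*} [Fintype α] [DecidableEq α] {a b c : α}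
    (hab : a ≠ b) (hac : a ≠ c) (hbc : b ≠ c) : (swap a b * swap a c) ^ 3 = 1 := by
  rw [← (Perm.isThreeCycle_swap_mul_swap_same hab hac hbc).orderOf, pow_orderOf_eq_one]

theorem isLiftable_adjSwap (n : ℕ) : (CoxeterMatrix.A n).IsLiftable (adjSwap (n := n)) := by
  intro i j
  simp only [CoxeterMatrix.A, Matrix.of_apply, adjSwap]
  split_ifs with hij hadj
  · simp [hij]
  · rcases hadj with h | h
    · rw [(show i.castSucc = j.succ from Fin.ext (by simp [h])), swap_comm j.castSucc]
      exact swap_mul_swap_pow_three (by simp [Fin.ext_iff]; omega) (by simp [Fin.ext_iff])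
        (by simp [Fin.ext_iff]; omega)
    · rw [← (show i.succ = j.castSucc from Fin.ext (by simp [h])), swap_comm i.castSucc]
      exact swap_mul_swap_pow_three (by simp [Fin.ext_iff]) (by simp [Fin.ext_iff]; omega)
        (by simp [Fin.ext_iff]; omega)
  · have hd : (swap i.castSucc i.succ).Disjoint (swap j.castSucc j.succ) := by
      apply Perm.disjoint_swap_swap
      simp [Fin.ext_iff] at *
      omega
    rw [pow_two, mul_assoc, ← mul_assoc _ (swap i.castSucc i.succ), ← hd.commute.eq]
    simp

def inversions {n : ℕ} (σ : Perm (Fin n)) : Finset (Fin n × Fin n) :=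
  {p | p.1 < p.2 ∧ σ p.2 < σ p.1}

theorem mem_inversions {n : ℕ} {σ : Perm (Fin n)} {p : Fin n × Fin n} :
    p ∈ inversions σ ↔ p.1 < p.2 ∧ σ p.2 < σ p.1 := by
  simp [inversions]

theorem Fin.swap_lt_swap_iff {n : ℕ} {a b x y : Fin n} (hab : (b : ℕ) = a + 1)
    (hxy : ¬(x = a ∧ y = b)) (hyx : ¬(x = b ∧ y = a)) :
    swap a b x < swap a b y ↔ x < y := by
  rw [swap_apply_def, swap_apply_def]
  simp only [Fin.lt_def, Fin.ext_iff] at *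
  split_ifs <;> omega

theorem card_inversions_adjSwap_mul_le {n : ℕ} (i : Fin n) (σ : Perm (Fin (n + 1))) :
    #(inversions (adjSwap i * σ)) ≤ #(inversions σ) + 1 := by
  set u := σ⁻¹ i.castSucc
  set v := σ⁻¹ i.succ
  -- Only the pair of positions holding the values `i, i + 1` can become an inversion.
  have hsub : inversions (adjSwap i * σ) ⊆ insert (min u v, max u v) (inversions σ) := by
    intro p hp
    rw [mem_inversions, Perm.mul_apply, Perm.mul_apply, adjSwap] at hp
    rw [mem_insert, mem_inversions]
    by_cases h : (σ p.1 = i.castSucc ∧ σ p.2 = i.succ) ∨ (σ p.1 = i.succ ∧ σ p.2 = i.castSucc)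
    · left
      rcases h with ⟨h1, h2⟩ | ⟨h1, h2⟩
      · have hu : u = p.1 := by simp [u, ← h1]
        have hv : v = p.2 := by simp [v, ← h2]
        rw [hu, hv, min_eq_left hp.1.le, max_eq_right hp.1.le]
      · have hu : u = p.2 := by simp [u, ← h2]
        have hv : v = p.1 := by simp [v, ← h1]
        rw [hu, hv, min_eq_right hp.1.le, max_eq_left hp.1.le]
    · right
      push Not at h
      exact ⟨hp.1, (Fin.swap_lt_swap_iff (by simp) (fun h' => h.2 h'.2 h'.1)
        (fun h' => h.1 h'.2 h'.1)).1 hp.2⟩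
  exact (card_le_card hsub).trans (card_insert_le _ _)

namespace CoxeterSystem

variable {n : ℕ} {W : Type*} [Group W] (cs : CoxeterSystem (CoxeterMatrix.A n) W)

theorem card_inversions_lift_le_length (w : W) :
    #(inversions (cs.lift ⟨adjSwap, isLiftable_adjSwap n⟩ w)) ≤ cs.length w :=
  cs.le_length_of_simple_mul_le_succ (f := fun w => #(inversions (cs.lift ⟨adjSwap, _⟩ w)))
    (by simp [inversions]; exact fun _ _ => le_of_lt)
    (fun i w => by simpa [cs.lift_apply_simple] using card_inversions_adjSwap_mul_le i _) w

theorem length_wordProd_of_card_inversions {ω : List (Fin n)}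
    (h : #(inversions (ω.map adjSwap).prod) = ω.length) :
    cs.length (cs.wordProd ω) = ω.length :=
  (cs.length_wordProd_le ω).antisymm <| h ▸ cs.lift_wordProd (isLiftable_adjSwap n) ω ▸
    card_inversions_lift_le_length cs _

end CoxeterSystem

def wordsB₂ : List (List (Fin 2)) :=
  [[], [0], [1], [0, 1], [1, 0], [0, 1, 0], [1, 0, 1], [0, 1, 0, 1]]

theorem CoxeterSystem.mem_map_wordProd_wordsB₂ {W : Type*} [Group W]
    (cs : CoxeterSystem (CoxeterMatrix.B 2) W) (w : W) : w ∈ wordsB₂.map cs.wordProd := by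
  have braid : cs.wordProd [1, 0, 1, 0] = cs.wordProd [0, 1, 0, 1] :=
    cs.wordProd_braidWord_eq 1 0
  have braid' : cs.wordProd [1, 0, 1, 0, 1] = cs.wordProd [0, 1, 0] :=
    calc cs.wordProd [1, 0, 1, 0, 1] = cs.wordProd [1, 0, 1, 0] * cs.simple 1 :=
          cs.wordProd_concat 1 [1, 0, 1, 0]
      _ = cs.wordProd [0, 1, 0] * cs.simple 1 * cs.simple 1 := by
          rw [braid, ← cs.wordProd_concat 1 [0, 1, 0]]; rfl
      _ = cs.wordProd [0, 1, 0] := cs.simple_mul_simple_cancel_right 1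
  induction w using cs.simple_induction_left with
  | one => exact List.mem_map.2 ⟨[], by simp [wordsB₂], rfl⟩
  | mul_simple_left w i ih =>
    obtain ⟨ω, hω, rfl⟩ := List.mem_map.1 ih
    rw [← cs.wordProd_cons]
    simp only [wordsB₂, List.mem_cons, List.not_mem_nil, or_false] at hω
    fin_cases i <;> rcases hω with rfl | rfl | rfl | rfl | rfl | rfl | rfl | rfl <;>
      first
      | exact List.mem_map.2 ⟨[0, 1, 0, 1], by simp [wordsB₂], braid.symm⟩
      | exact List.mem_map.2 ⟨[0, 1, 0], by simp [wordsB₂], braid'.symm⟩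
      | simp [wordsB₂, cs.wordProd_cons, cs.simple_mul_simple_cancel_left]

def unfoldingWord : Fin 2 → List (Fin 3) := ![[0, 2], [1]]

/-- For the folded embedding `φ : B₂ → A₃` with `φ(r₁) = s₁s₃` and `φ(r₂) = s₂`,
the unfolding polynomial is `∑_{w ∈ B₂} q^{ℓ_A(φ(w))} = [2]_q [3]_{-q} [4]_q`. -/
theorem stmt_4 {WB WA : Type*} [Group WB] [Group WA]
    (csB : CoxeterSystem (CoxeterMatrix.Bₙ 2) WB)
    (csA : CoxeterSystem (CoxeterMatrix.Aₙ 3) WA)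
    (φ : WB →* WA)
    (h1 : φ (csB.simple 0) = csA.simple 0 * csA.simple 2)
    (h2 : φ (csB.simple 1) = csA.simple 1) :
    ∑ᶠ w : WB, (X : Polynomial ℤ) ^ (csA.length (φ w)) =
      qint X 2 * qint (-X) 3 * qint X 4 := by
  have hφ : ∀ ω, φ (csB.wordProd ω) = csA.wordProd (ω.flatMap unfoldingWord) :=
    csB.map_wordProd csA φ unfoldingWord fun i => by
      fin_cases i <;> simp [unfoldingWord, CoxeterSystem.wordProd, h1, h2]
  have hnodup : (wordsB₂.map csB.wordProd).Nodup := by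
    refine List.Nodup.of_map φ ?_
    simpa [List.map_map, Function.comp_def, hφ] using
      csA.nodup_map_wordProd (isLiftable_adjSwap 3)
        (l := wordsB₂.map (List.flatMap unfoldingWord)) (by decide)
  have hlen : ∀ ω ∈ wordsB₂,
      csA.length (φ (csB.wordProd ω)) = (ω.flatMap unfoldingWord).length := fun ω hω =>
    hφ ω ▸ csA.length_wordProd_of_card_inversions (by revert ω; decide)
  calc ∑ᶠ w : WB, (X : ℤ[X]) ^ csA.length (φ w)
      = (wordsB₂.map fun ω => (X : ℤ[X]) ^ csA.length (φ (csB.wordProd ω))).sum := by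
        rw [finsum_eq_sum_map_of_nodup _ hnodup csB.mem_map_wordProd_wordsB₂, List.map_map]
        rfl
    _ = (wordsB₂.map fun ω => (X : ℤ[X]) ^ (ω.flatMap unfoldingWord).length).sum :=
        congrArg List.sum (List.map_congr_left fun ω hω => by rw [hlen ω hω])
    _ = qint X 2 * qint (-X) 3 * qint X 4 := by
        simp [wordsB₂, unfoldingWord, qint, sum_range_succ]
        ring
end

section
/- For all n \ge 1, the polynomial identity \prod_{k=1}^{2n} [k]_{(-1)^k q} = [2]_q [3]_{-q} [4]_q [5]_{-q} \cdots [2n-1]_{-q} [2n]_q holds, and this polynomial has nonnegative integer coefficients. -/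
open Polynomial Finset

lemma qint_geom (p : Polynomial ℤ) (k : ℕ) : qint p k * (p - 1) = p ^ k - 1 := geom_sum_mul p k

lemma pair (m : ℕ) :
    qint (-X) (2*m+1) * qint X (2*m+2) =
      (1 + X^(2*m+1)) * ∑ i ∈ Finset.range (m+1), (X^2 : Polynomial ℤ)^i := by
  have h2 : (X^2 - 1 : Polynomial ℤ) ≠ 0 := fun h => by simpa using congrArg (eval 2) h
  apply mul_right_cancel₀ h2
  have g1 : qint X (2*m+2) * (X - 1) = X^(2*m+2) - 1 := qint_geom X (2*m+2)
  have g2 : qint (-X) (2*m+1) * (-X - 1) = -X^(2*m+1) - 1 := by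
    have := qint_geom (-X) (2*m+1)
    rwa [Odd.neg_pow ⟨m, by ring⟩] at this
  have g3 : (∑ i ∈ Finset.range (m+1), (X^2 : Polynomial ℤ)^i) * (X^2 - 1) = X^(2*m+2) - 1 := by
    have := geom_sum_mul (X^2 : Polynomial ℤ) (m+1)
    rwa [← pow_mul, show 2*(m+1) = 2*m+2 by ring] at this
  linear_combination (qint (-X) (2*m+1) * (X+1)) * g1 + (1 - X^(2*m+2)) * g2 - (1+X^(2*m+1)) * g3

lemma nonneg_mul {p q : Polynomial ℤ} (hp : ∀ i, 0 ≤ p.coeff i) (hq : ∀ i, 0 ≤ q.coeff i) :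
    ∀ i, 0 ≤ (p * q).coeff i := by
  intro i
  rw [coeff_mul]
  exact Finset.sum_nonneg fun x _ => mul_nonneg (hp _) (hq _)

lemma pair_nonneg (m : ℕ) : ∀ i, 0 ≤ (qint (-X) (2*m+1) * qint X (2*m+2)).coeff i := by
  rw [pair]
  apply nonneg_mul
  · intro i
    simp only [coeff_add, coeff_one, coeff_X_pow]
    split_ifs <;> norm_num
  · intro i
    rw [finset_sum_coeff]
    apply Finset.sum_nonneg
    intro j _
    rw [← pow_mul, coeff_X_pow]
    split_ifs <;> norm_num

lemma prod_nonneg' (n : ℕ) :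
    ∀ i, 0 ≤ (∏ k ∈ Finset.Icc 1 (2 * n), qint ((-1) ^ k * X) k).coeff i := by
  induction n with
  | zero => intro i; simp [coeff_one]; split_ifs <;> norm_num
  | succ n ih =>
    have h1 : 2 * (n + 1) = (2 * n + 1) + 1 := by ring
    rw [h1, Finset.prod_Icc_succ_top (by omega), Finset.prod_Icc_succ_top (by omega), mul_assoc]
    have e1 : ((-1 : Polynomial ℤ)) ^ (2 * n + 1) * X = -X := by
      rw [Odd.neg_one_pow ⟨n, by ring⟩]; ring
    have e2 : ((-1 : Polynomial ℤ)) ^ (2 * n + 1 + 1) * X = X := by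
      rw [Even.neg_one_pow ⟨n + 1, by ring⟩]; ring
    rw [e1, e2]
    exact nonneg_mul ih (by simpa using pair_nonneg n)

/-- For all `n ≥ 1`, `∏_{k=1}^{2n} [k]_{(-1)^k q} = [2]_q [3]_{-q} [4]_q ⋯ [2n-1]_{-q} [2n]_q`,
and this polynomial has nonnegative coefficients. -/
theorem stmt_5 (n : ℕ) (hn : 1 ≤ n) :
    (∏ k ∈ Finset.Icc 1 (2 * n), qint ((-1) ^ k * X) k) =
      (∏ k ∈ Finset.Icc 2 (2 * n), qint ((-1) ^ k * X) k) ∧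
    ∀ i : ℕ, 0 ≤ (∏ k ∈ Finset.Icc 1 (2 * n), qint ((-1) ^ k * X) k).coeff i := by
  constructor
  · have h : Finset.Icc 1 (2 * n) = insert 1 (Finset.Icc 2 (2 * n)) := by
      ext x; simp [Finset.mem_Icc, Finset.mem_insert]; omega
    rw [h, Finset.prod_insert (by simp)]
    simp [qint]
  · exact prod_nonneg' n
end

section
/- For all n \ge 1, the polynomial identity B_n(-q) \cdot U^{A_{2n-1}}_{B_n}(q) = A_{2n-1}(-q) \cdot B_n(q) holds, where A_m(q) = [2]_q [3]_q \cdots [m+1]_q is the Poincaré polynomial of the symmetric group S_{m+1}, B_n(q) = [2]_q [4]_q \cdots [2n]_q is the Poincaré polynomial of the hyperoctahedral group, and U^{A_{2n-1}}_{B_n}(q) = \prod_{k=1}^{2n} [k]_{(-1)^k q}. -/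
open Polynomial Finset

/-- The Poincaré polynomial `A_m(p) = [2]_p [3]_p ⋯ [m+1]_p` of the symmetric group `S_{m+1}`. -/
noncomputable def Apoly (m : ℕ) (p : Polynomial ℤ) : Polynomial ℤ :=
  ∏ k ∈ Finset.Icc 1 m, qint p (k + 1)

/-- The Poincaré polynomial `B_n(p) = [2]_p [4]_p ⋯ [2n]_p` of the hyperoctahedral group. -/
noncomputable def Bpoly (n : ℕ) (p : Polynomial ℤ) : Polynomial ℤ :=
  ∏ k ∈ Finset.Icc 1 n, qint p (2 * k)

lemma Bpoly_succ (n : ℕ) (p : Polynomial ℤ) :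
    Bpoly (n + 1) p = Bpoly n p * qint p (2 * (n + 1)) := by
  unfold Bpoly
  rw [Finset.prod_Icc_succ_top (by omega)]

lemma Apoly_succ (m : ℕ) (p : Polynomial ℤ) :
    Apoly (m + 1) p = Apoly m p * qint p (m + 2) := by
  unfold Apoly
  rw [Finset.prod_Icc_succ_top (by omega)]

/-- `B_n(-q) ⋅ U_{B_n}^{A_{2n-1}}(q) = A_{2n-1}(-q) ⋅ B_n(q)` where
`U_{B_n}^{A_{2n-1}}(q) = ∏_{k=1}^{2n} [k]_{(-1)^k q}`. -/
theorem stmt_7 (n : ℕ) (hn : 1 ≤ n) :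
    Bpoly n (-X) * (∏ k ∈ Finset.Icc 1 (2 * n), qint ((-1) ^ k * X) k) =
      Apoly (2 * n - 1) (-X) * Bpoly n X := by
  induction n, hn using Nat.le_induction with
  | base =>
      show Bpoly 1 (-X) * (∏ k ∈ Finset.Icc 1 2, qint ((-1) ^ k * X) k) =
        Apoly 1 (-X) * Bpoly 1 X
      rw [show Finset.Icc 1 2 = {1, 2} from rfl]
      simp [Apoly, Bpoly, qint, Finset.sum_range_succ]
  | succ n hn ih =>
      have e1 : 2 * (n + 1) = (2 * n + 1) + 1 := by ring
      have e2 : 2 * n + 1 + 1 - 1 = (2 * n - 1 + 1) + 1 := by omega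
      have e3 : 2 * n - 1 + 1 = 2 * n := by omega
      rw [e1, Finset.prod_Icc_succ_top (by omega), Finset.prod_Icc_succ_top (by omega),
        e2, Apoly_succ, Apoly_succ, e3, Bpoly_succ, Bpoly_succ]
      have s1 : ((-1 : Polynomial ℤ)) ^ (2 * n + 1) = -1 := Odd.neg_one_pow ⟨n, by ring⟩
      have s2 : ((-1 : Polynomial ℤ)) ^ (2 * n + 1 + 1) = 1 := Even.neg_one_pow ⟨n + 1, by ring⟩
      rw [s1, s2, one_mul, neg_one_mul]
      have e4 : 2 * n - 1 + 2 = 2 * n + 1 := by omega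
      have e5 : 2 * (n + 1) = 2 * n + 1 + 1 := by ring
      rw [e4, e5]
      linear_combination (qint (-X) (2 * n + 1) * qint (-X) (2 * n + 1 + 1) * qint X (2 * n + 1 + 1)) * ih
end

section
/- For all n \ge 1, B_n(-q) \cdot \prod_{k=1}^{2n+1} [k]_{(-1)^k q} = A_{2n}(-q) \cdot B_n(q), where A_m(q) = \prod_{k=1}^{m} [k+1]_q and B_n(q) = \prod_{k=1}^{n} [2k]_q. -/
open Polynomial Finset

lemma stmt_8_aux (n : ℕ) :
    Bpoly n (-X) * (∏ k ∈ Finset.Icc 1 (2 * n + 1), qint ((-1) ^ k * X) k) =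
      Apoly (2 * n) (-X) * Bpoly n X := by
  induction n with
  | zero => simp [Bpoly, Apoly, qint]
  | succ m ih =>
    have h2 : 2 * (m + 1) + 1 = (2 * m + 1) + 1 + 1 := by ring
    rw [h2, Finset.prod_Icc_succ_top (by omega), Finset.prod_Icc_succ_top (by omega)]
    have he : ((-1 : Polynomial ℤ)) ^ (2 * m + 1 + 1) = 1 := by
      exact Even.neg_one_pow ⟨m+1, by ring⟩
    have ho : ((-1 : Polynomial ℤ)) ^ (2 * m + 1 + 1 + 1) = -1 := by
      exact Odd.neg_one_pow ⟨m+1, by ring⟩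
    have h3 : 2 * (m + 1) = 2 * m + 1 + 1 := by ring
    rw [he, ho, Bpoly_succ, Bpoly_succ, h3, Apoly_succ, Apoly_succ]
    have h5 : -X = (-1 : Polynomial ℤ) * X := by ring
    rw [← h5, one_mul]
    linear_combination (qint (-X) (2 * m + 1 + 1) * qint X (2 * m + 1 + 1) * qint (-X) (2 * m + 2 + 1)) * ih

/-- `B_n(-q) ⋅ ∏_{k=1}^{2n+1} [k]_{(-1)^k q} = A_{2n}(-q) ⋅ B_n(q)`. -/
theorem stmt_8 (n : ℕ) (hn : 1 ≤ n) :
    Bpoly n (-X) * (∏ k ∈ Finset.Icc 1 (2 * n + 1), qint ((-1) ^ k * X) k) =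
      Apoly (2 * n) (-X) * Bpoly n X := by
  exact stmt_8_aux n
end

section
/- Let I_2(n+1) be the dihedral group with generators r_1, r_2 and relation (r_1 r_2)^{n+1} = e, where n = 2m is even. Let \phi : I_2(n+1) \to S_{n+1} be the homomorphism sending r_1 to the product of the odd-indexed adjacent transpositions s_1 s_3 \cdots s_{n-1} and r_2 to the product of the even-indexed ones s_2 s_4 \cdots s_n. Then \phi is injective and \sum_{w \in I_2(n+1)} q^{\ell_A(\phi(w))} = [2]_{q^m} [n+1]_{q^m}. -/
open Polynomial

namespace Stmt9

/-! ### ℕ-level combinatorics of folded dihedral permutations -/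

def wc (m x : ℕ) : ℕ := if x % 2 = 0 then x / 2 else 2*m + 1 - (x+1)/2
def ps (m w : ℕ) : ℕ := if w ≤ m then 2*w else 4*m+1 - 2*w
def pw (m k w : ℕ) : ℕ :=
  if k % 2 = 0 then (if w < k/2 then w + (2*m+1) - k/2 else w - k/2)
  else (if w ≤ k/2 then k/2 - w else k/2 + (2*m+1) - w)
def qw (m k w : ℕ) : ℕ :=
  if k % 2 = 0 then (if w + k/2 < 2*m+1 then w + k/2 else w + k/2 - (2*m+1))
  else (if w ≤ 2*m - k/2 then 2*m - k/2 - w else 2*m - k/2 + (2*m+1) - w)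
def Pf (m k x : ℕ) : ℕ := ps m (pw m k (wc m x))
def Qf (m k x : ℕ) : ℕ := ps m (qw m k (wc m x))

lemma wc_lt {m x : ℕ} (h : x < 2*m+1) : wc m x < 2*m+1 := by unfold wc; split_ifs <;> omega
lemma ps_lt {m w : ℕ} (h : w < 2*m+1) : ps m w < 2*m+1 := by unfold ps; split_ifs <;> omega
lemma wc_ps {m w : ℕ} (h : w < 2*m+1) : wc m (ps m w) = w := by
  unfold wc ps; split_ifs <;> omega
lemma ps_wc {m x : ℕ} (h : x < 2*m+1) : ps m (wc m x) = x := by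
  unfold wc ps; split_ifs <;> omega
lemma wc_even {m j : ℕ} : wc m (2*j) = j := by unfold wc; split_ifs <;> omega
lemma wc_odd {m j : ℕ} (h : j ≤ m) : wc m (2*j+1) = 2*m - j := by
  unfold wc; split_ifs <;> omega

lemma pw_lt {m k w : ℕ} (hk : k ≤ 2*m+1) (h : w < 2*m+1) : pw m k w < 2*m+1 := by
  unfold pw; split_ifs <;> omega
lemma qw_lt {m k w : ℕ} (hk : k ≤ 2*m+1) (h : w < 2*m+1) : qw m k w < 2*m+1 := by
  unfold qw; split_ifs <;> omega
lemma Pf_lt {m k x : ℕ} (hk : k ≤ 2*m+1) (h : x < 2*m+1) : Pf m k x < 2*m+1 :=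
  ps_lt (pw_lt hk (wc_lt h))
lemma Qf_lt {m k x : ℕ} (hk : k ≤ 2*m+1) (h : x < 2*m+1) : Qf m k x < 2*m+1 :=
  ps_lt (qw_lt hk (wc_lt h))

lemma pw_zero {m w : ℕ} (h : w < 2*m+1) : pw m 0 w = w := by
  unfold pw; split_ifs <;> omega
lemma qw_zero {m w : ℕ} (h : w < 2*m+1) : qw m 0 w = w := by
  unfold qw; split_ifs <;> omega
lemma Pf_zero {m x : ℕ} (h : x < 2*m+1) : Pf m 0 x = x := by
  unfold Pf; rw [pw_zero (wc_lt h), ps_wc h]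
lemma Qf_zero {m x : ℕ} (h : x < 2*m+1) : Qf m 0 x = x := by
  unfold Qf; rw [qw_zero (wc_lt h), ps_wc h]

lemma pw_rec {m k w : ℕ} (hk : k ≤ 2*m) (h : w < 2*m+1) :
    pw m (k+1) w = qw m k (pw m 1 w) := by
  obtain ⟨t, rfl | rfl⟩ : ∃ t, k = 2*t ∨ k = 2*t+1 := ⟨k/2, by omega⟩ <;>
  · unfold pw qw
    simp only [show (2*t)/2 = t by omega, show (2*t+1)/2 = t by omega,
      show (2*t+1+1)/2 = t+1 by omega, show (2*t+1)%2 = 1 by omega,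
      show (2*t)%2 = 0 by omega, show (2*t+1+1)%2 = 0 by omega,
      show (1:ℕ)/2 = 0 by norm_num, show (1:ℕ)%2 = 1 by norm_num,
      if_true, if_false, reduceIte]
    split_ifs <;> first | contradiction | omega

lemma qw_rec {m k w : ℕ} (hk : k ≤ 2*m) (h : w < 2*m+1) :
    qw m (k+1) w = pw m k (qw m 1 w) := by
  obtain ⟨t, rfl | rfl⟩ : ∃ t, k = 2*t ∨ k = 2*t+1 := ⟨k/2, by omega⟩ <;>
  · unfold pw qw
    simp only [show (2*t)/2 = t by omega, show (2*t+1)/2 = t by omega,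
      show (2*t+1+1)/2 = t+1 by omega, show (2*t+1)%2 = 1 by omega,
      show (2*t)%2 = 0 by omega, show (2*t+1+1)%2 = 0 by omega,
      show (1:ℕ)/2 = 0 by norm_num, show (1:ℕ)%2 = 1 by norm_num,
      if_true, if_false, reduceIte]
    split_ifs <;> first | contradiction | omega

lemma Pf_rec {m k x : ℕ} (hk : k ≤ 2*m) (h : x < 2*m+1) :
    Pf m (k+1) x = Qf m k (Pf m 1 x) := by
  unfold Pf Qf
  rw [wc_ps (pw_lt (by omega) (wc_lt h)), pw_rec hk (wc_lt h)]

lemma Qf_rec {m k x : ℕ} (hk : k ≤ 2*m) (h : x < 2*m+1) :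
    Qf m (k+1) x = Pf m k (Qf m 1 x) := by
  unfold Pf Qf
  rw [wc_ps (qw_lt (by omega) (wc_lt h)), qw_rec hk (wc_lt h)]

lemma ascQ {m k j : ℕ} (hk : k ≤ 2*m) (hj : j < m) :
    Qf m k (2*j+1) < Qf m k (2*j+2) := by
  unfold Qf
  rw [wc_odd (by omega)]
  rw [show 2*j+2 = 2*(j+1) by ring, wc_even]
  unfold qw ps
  split_ifs <;> omega

lemma ascP {m k j : ℕ} (hk : k ≤ 2*m) (hj : j < m) :
    Pf m k (2*j) < Pf m k (2*j+1) := by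
  unfold Pf
  rw [wc_even, wc_odd (by omega)]
  unfold pw ps
  split_ifs <;> omega

lemma PQ_ne {m k : ℕ} (h1 : 1 ≤ k) (h2 : k ≤ 2*m) : Pf m k 0 ≠ Qf m k 0 := by
  unfold Pf Qf
  have : wc m 0 = 0 := by unfold wc; simp
  rw [this]
  unfold pw qw ps
  split_ifs <;> omega


/-! ### Inversion counts of permutations of `Fin N` -/

variable {N : ℕ}

def invC (σ : Equiv.Perm (Fin N)) : ℕ :=
  (Finset.univ.filter (fun p : Fin N × Fin N => p.1 < p.2 ∧ σ p.2 < σ p.1)).card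

lemma invC_one : invC (1 : Equiv.Perm (Fin N)) = 0 := by
  rw [invC, Finset.card_eq_zero, Finset.filter_eq_empty_iff]
  rintro p - ⟨h1, h2⟩
  simp only [Equiv.Perm.one_apply] at h2
  exact absurd h2 (lt_asymm h1)

lemma invC_mul_swap_of_lt (σ : Equiv.Perm (Fin N)) (a b : Fin N) (hab : (a:ℕ)+1 = b)
    (h : σ a < σ b) : invC (σ * Equiv.swap a b) = invC σ + 1 := by
  classical
  have hab' : a ≠ b := by
    intro h'; rw [h'] at hab; omega
  have hba : a < b := by rw [Fin.lt_def]; omega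
  set τ := Equiv.swap a b with hτ
  have hτa : τ a = b := Equiv.swap_apply_left a b
  have hτb : τ b = a := Equiv.swap_apply_right a b
  have hττ : ∀ x, τ (τ x) = x := fun x => Equiv.swap_apply_self a b x
  have hsort : ∀ x y : Fin N, x < y → (x, y) ≠ (a, b) → τ x < τ y := by
    intro x y hxy hne
    have happx := Equiv.swap_apply_def a b x
    have happy := Equiv.swap_apply_def a b y
    rw [← hτ] at happx happy
    rw [Fin.lt_def] at hxy ⊢
    have hne' : ¬(x = a ∧ y = b) := by
      intro ⟨u, v⟩; exact hne (by rw [u, v])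
    simp only [Fin.ext_iff, Prod.mk.injEq, not_and] at hne'
    rw [happx, happy]
    split_ifs <;> simp only [Fin.ext_iff] at * <;> omega
  have himg : ∀ x y : Fin N, x < y → (x, y) ≠ (a, b) → (τ x, τ y) ≠ (a, b) := by
    intro x y hxy hne heq
    rw [Prod.mk.injEq] at heq
    obtain ⟨h1, h2⟩ := heq
    have hx : x = b := by rw [← hττ x, h1, hτa]
    have hy : y = a := by rw [← hττ y, h2, hτb]
    rw [hx, hy] at hxy
    exact absurd hxy (lt_asymm hba)
  have key : invC (σ * τ) =
      (insert (a, b) (Finset.univ.filter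
        (fun p : Fin N × Fin N => p.1 < p.2 ∧ σ p.2 < σ p.1))).card := by
    apply Finset.card_nbij'
      (fun p => if p = (a, b) then p else (τ p.1, τ p.2))
      (fun p => if p = (a, b) then p else (τ p.1, τ p.2))
    · intro p hp
      rw [Finset.mem_coe, Finset.mem_filter] at hp
      beta_reduce
      obtain ⟨-, hlt, hinv⟩ := hp
      by_cases hpe : p = (a, b)
      · rw [if_pos hpe, hpe]
        exact Finset.mem_insert_self _ _
      · rw [if_neg hpe]
        apply Finset.mem_insert_of_mem
        rw [Finset.mem_filter]
        refine ⟨Finset.mem_univ _, hsort _ _ hlt hpe, ?_⟩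
        simpa [Equiv.Perm.mul_apply] using hinv
    · intro q hq
      rw [Finset.mem_coe, Finset.mem_insert] at hq
      beta_reduce
      have habnot : ((a, b) : Fin N × Fin N) ∉ (Finset.univ.filter
          (fun p : Fin N × Fin N => p.1 < p.2 ∧ σ p.2 < σ p.1)) := by
        rw [Finset.mem_filter]
        rintro ⟨-, -, hc⟩
        exact absurd hc (lt_asymm h)
      rcases hq with rfl | hq
      · rw [if_pos rfl, Finset.mem_coe, Finset.mem_filter]
        refine ⟨Finset.mem_univ _, hba, ?_⟩
        simp only [Equiv.Perm.mul_apply, hτa, hτb]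
        exact h
      · have hqne : q ≠ (a, b) := fun hc => habnot (hc ▸ hq)
        rw [Finset.mem_filter] at hq
        obtain ⟨-, hlt, hinv⟩ := hq
        rw [if_neg hqne, Finset.mem_coe, Finset.mem_filter]
        refine ⟨Finset.mem_univ _, hsort _ _ hlt hqne, ?_⟩
        simp only [Equiv.Perm.mul_apply, hττ]
        exact hinv
    · intro p hp
      rw [Finset.mem_coe, Finset.mem_filter] at hp
      beta_reduce
      obtain ⟨-, hlt, -⟩ := hp
      by_cases hpe : p = (a, b)
      · rw [if_pos hpe, if_pos hpe, hpe]
      · rw [if_neg hpe, if_neg (himg _ _ hlt hpe)]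
        exact Prod.ext (hττ p.1) (hττ p.2)
    · intro q hq
      rw [Finset.mem_coe, Finset.mem_insert] at hq
      beta_reduce
      rcases hq with rfl | hq
      · rw [if_pos rfl, if_pos rfl]
      · rw [Finset.mem_filter] at hq
        obtain ⟨-, hlt, -⟩ := hq
        by_cases hqe : q = (a, b)
        · rw [if_pos hqe, if_pos hqe, hqe]
        · rw [if_neg hqe, if_neg (himg _ _ hlt hqe)]
          exact Prod.ext (hττ q.1) (hττ q.2)
  rw [key, Finset.card_insert_of_notMem, invC]
  rw [Finset.mem_filter]
  rintro ⟨-, -, hc⟩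
  exact absurd hc (lt_asymm h)

lemma invC_mul_swap_of_gt (σ : Equiv.Perm (Fin N)) (a b : Fin N) (hab : (a:ℕ)+1 = b)
    (h : σ b < σ a) : invC (σ * Equiv.swap a b) + 1 = invC σ := by
  have h2 : (σ * Equiv.swap a b) a < (σ * Equiv.swap a b) b := by
    simp only [Equiv.Perm.mul_apply, Equiv.swap_apply_left, Equiv.swap_apply_right]
    exact h
  have := invC_mul_swap_of_lt (σ * Equiv.swap a b) a b hab h2
  rw [mul_assoc, Equiv.swap_mul_self, mul_one] at this
  omega

lemma invC_mul_swap_le (σ : Equiv.Perm (Fin N)) (a b : Fin N) (hab : (a:ℕ)+1 = b) :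
    invC (σ * Equiv.swap a b) ≤ invC σ + 1 := by
  have hab' : a ≠ b := by intro h'; rw [h'] at hab; omega
  rcases lt_or_gt_of_ne (fun hc => hab' (σ.injective hc) : σ a ≠ σ b) with h | h
  · rw [invC_mul_swap_of_lt σ a b hab h]
  · have := invC_mul_swap_of_gt σ a b hab h
    omega


/-! ### Adjacent transpositions and block products -/

def adj (m p : ℕ) : Equiv.Perm (Fin (2*m+1)) :=
  Equiv.swap ⟨p % (2*m+1), Nat.mod_lt _ (by omega)⟩ ⟨(p+1) % (2*m+1), Nat.mod_lt _ (by omega)⟩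

lemma adj_eq {m p : ℕ} (hp : p+1 < 2*m+1) :
    adj m p = Equiv.swap ⟨p, by omega⟩ ⟨p+1, hp⟩ := by
  unfold adj
  congr 1 <;> exact Fin.ext (Nat.mod_eq_of_lt (by omega))

lemma adj_apply {m p : ℕ} (hp : p+1 < 2*m+1) (x : Fin (2*m+1)) :
    ((adj m p) x).1 = if x.1 = p then p+1 else if x.1 = p+1 then p else x.1 := by
  rw [adj_eq hp, Equiv.swap_apply_def]
  split_ifs <;> simp only [Fin.ext_iff] at * <;> omega

def blockP (m c r : ℕ) : Equiv.Perm (Fin (2*m+1)) :=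
  ((List.range r).map (fun j => adj m (2*j+c))).prod

lemma blockP_zero {m c : ℕ} : blockP m c 0 = 1 := rfl

lemma blockP_succ {m c r : ℕ} : blockP m c (r+1) = blockP m c r * adj m (2*r+c) := by
  rw [blockP, List.range_succ, List.map_append, List.prod_append]
  simp [blockP]

lemma blockP_apply {m c r : ℕ} (h : 2*r + c ≤ 2*m+1) (x : Fin (2*m+1)) :
    ((blockP m c r) x).1 =
      if c ≤ x.1 ∧ x.1 < 2*r+c then (if (x.1 - c) % 2 = 0 then x.1 + 1 else x.1 - 1)
      else x.1 := by
  induction r generalizing x with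
  | zero =>
    rw [blockP_zero]
    simp only [Equiv.Perm.one_apply]
    split_ifs <;> omega
  | succ r ih =>
    rw [blockP_succ, Equiv.Perm.mul_apply]
    have hA := adj_apply (m := m) (p := 2*r+c) (by omega) x
    have hB := ih (by omega) (adj m (2*r+c) x)
    have hxlt := x.2
    rw [hB, hA]
    split_ifs <;> first | contradiction | omega

lemma blockP_fix {m c r : ℕ} (h : 2*r + c ≤ 2*m+1) (x : Fin (2*m+1))
    (hx : 2*r + c ≤ x.1 ∨ x.1 < c) : blockP m c r x = x := by
  apply Fin.ext
  rw [blockP_apply h]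
  split_ifs <;> omega

lemma invC_mul_blockP {m c r : ℕ} (σ : Equiv.Perm (Fin (2*m+1))) (h : 2*r + c ≤ 2*m+1)
    (asc : ∀ j, j < r → ∀ x y : Fin (2*m+1), x.1 = 2*j+c → y.1 = 2*j+c+1 →
      (σ x).1 < (σ y).1) :
    invC (σ * blockP m c r) = invC σ + r := by
  induction r with
  | zero => rw [blockP_zero, mul_one]; omega
  | succ r ih =>
    rw [blockP_succ, ← mul_assoc,
      adj_eq (show 2*r+c+1 < 2*m+1 by omega)]
    rw [invC_mul_swap_of_lt _ _ _ (by simp)]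
    · rw [ih (by omega) (fun j hj => asc j (by omega))]; omega
    · show (σ * blockP m c r) _ < (σ * blockP m c r) _
      simp only [Equiv.Perm.mul_apply]
      rw [blockP_fix (by omega) _ (by left; simp),
        blockP_fix (by omega) _ (by left; simp)]
      rw [Fin.lt_def]
      exact asc r (by omega) _ _ rfl rfl

lemma invC_prod_adj_le {m : ℕ} (l : List ℕ) (hl : ∀ p ∈ l, p+1 < 2*m+1) :
    invC ((l.map (adj m)).prod) ≤ l.length := by
  induction l using List.reverseRecOn with
  | nil => simp [invC_one]
  | append_singleton l p ih =>
    rw [List.map_append, List.prod_append, List.map_singleton, List.prod_singleton]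
    have hp : p + 1 < 2*m+1 := hl p (by simp)
    rw [adj_eq hp]
    calc invC ((l.map (adj m)).prod * Equiv.swap ⟨p, by omega⟩ ⟨p+1, hp⟩)
        ≤ invC ((l.map (adj m)).prod) + 1 := invC_mul_swap_le _ _ _ (by simp)
      _ ≤ l.length + 1 := by
          have := ih (fun q hq => hl q (by simp [hq]))
          omega
      _ = (l ++ [p]).length := by simp

/-! ### Braid and commutation relations for adjacent swaps -/

lemma braid3 {α : Type*} [DecidableEq α] {a b c : α} (hab : a ≠ b) (hbc : b ≠ c)
    (hac : a ≠ c) : (Equiv.swap a b * Equiv.swap b c) ^ 3 = 1 := by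
  have h1 : Equiv.swap b a * Equiv.swap c b * Equiv.swap b a = Equiv.swap a c :=
    Equiv.swap_mul_swap_mul_swap hbc.symm hac.symm
  have h2 : Equiv.swap b c * Equiv.swap a b * Equiv.swap b c = Equiv.swap c a :=
    Equiv.swap_mul_swap_mul_swap hab hac
  rw [Equiv.swap_comm b a, Equiv.swap_comm c b] at h1
  have h3 : (Equiv.swap a b * Equiv.swap b c) ^ 3 =
      (Equiv.swap a b * Equiv.swap b c * Equiv.swap a b) *
      (Equiv.swap b c * Equiv.swap a b * Equiv.swap b c) := by
    simp only [pow_succ, pow_zero, one_mul, mul_assoc]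
  rw [h3, h1, h2, Equiv.swap_comm c a, Equiv.swap_mul_self]

lemma swap_comm_disjoint {m : ℕ} {a b c d : Fin (2*m+1)}
    (h1 : a ≠ c) (h2 : a ≠ d) (h3 : b ≠ c) (h4 : b ≠ d) :
    Equiv.swap a b * Equiv.swap c d = Equiv.swap c d * Equiv.swap a b := by
  ext x
  simp only [Equiv.Perm.mul_apply, Equiv.swap_apply_def]
  split_ifs <;> simp only [Fin.ext_iff] at * <;> omega

lemma sq_eq_one_of_disjoint {m : ℕ} {a b c d : Fin (2*m+1)}
    (hab : a ≠ b) (hcd : c ≠ d)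
    (h1 : a ≠ c) (h2 : a ≠ d) (h3 : b ≠ c) (h4 : b ≠ d) :
    (Equiv.swap a b * Equiv.swap c d) ^ 2 = 1 := by
  have hc := swap_comm_disjoint (m := m) h1 h2 h3 h4
  have h5 : (Equiv.swap a b * Equiv.swap c d) ^ 2 =
      Equiv.swap a b * (Equiv.swap c d * Equiv.swap a b) * Equiv.swap c d := by
    simp only [pow_succ, pow_zero, one_mul, mul_assoc]
  rw [h5, ← hc]
  simp only [← mul_assoc]
  rw [Equiv.swap_mul_self, one_mul, Equiv.swap_mul_self]


lemma Pf_one {m x : ℕ} (h : x < 2*m+1) :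
    Pf m 1 x = if 1 ≤ x ∧ x < 2*m+1 then (if (x - 1) % 2 = 0 then x + 1 else x - 1) else x := by
  unfold Pf pw wc ps
  split_ifs <;> first | contradiction | omega

lemma Qf_one {m x : ℕ} (h : x < 2*m+1) :
    Qf m 1 x = if 0 ≤ x ∧ x < 2*m+0 then (if (x - 0) % 2 = 0 then x + 1 else x - 1) else x := by
  unfold Qf qw wc ps
  split_ifs <;> first | contradiction | omega

lemma adj_braid {m p : ℕ} (hp : p+2 < 2*m+1) : (adj m p * adj m (p+1))^3 = 1 := by
  rw [adj_eq (by omega), adj_eq (by omega)]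
  exact braid3 ((by simp only [ne_eq, Fin.mk.injEq]; omega)) ((by simp only [ne_eq, Fin.mk.injEq]; omega))
    ((by simp only [ne_eq, Fin.mk.injEq]; omega))

lemma adj_braid' {m p : ℕ} (hp : p+2 < 2*m+1) : (adj m (p+1) * adj m p)^3 = 1 := by
  rw [adj_eq (by omega), adj_eq (by omega)]
  have hb := braid3 (a := (⟨p+2, by omega⟩ : Fin (2*m+1))) (b := ⟨p+1, by omega⟩)
    (c := ⟨p, by omega⟩) ((by simp only [ne_eq, Fin.mk.injEq]; omega)) ((by simp only [ne_eq, Fin.mk.injEq]; omega))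
    ((by simp only [ne_eq, Fin.mk.injEq]; omega))
  rw [Equiv.swap_comm (⟨p+2, by omega⟩ : Fin (2*m+1)) ⟨p+1, by omega⟩,
    Equiv.swap_comm (⟨p+1, by omega⟩ : Fin (2*m+1)) ⟨p, by omega⟩] at hb
  exact hb

end Stmt9
open Stmt9 CoxeterSystem in
/-- Lusztig folding. -/
theorem stmt_9 (m : ℕ) (hm : 1 ≤ m) {WI WA : Type*} [Group WI] [Group WA]
    (csI : CoxeterSystem (CoxeterMatrix.I (2 * m - 1)) WI)
    (csA : CoxeterSystem (CoxeterMatrix.Aₙ (2 * m)) WA)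
    (φ : WI →* WA)
    (h1 : φ (csI.simple 0) =
      csA.wordProd ((List.range m).map (fun j => (⟨(2 * j) % (2 * m), Nat.mod_lt _ (by omega)⟩ : Fin (2 * m)))))
    (h2 : φ (csI.simple 1) =
      csA.wordProd ((List.range m).map (fun j => (⟨(2 * j + 1) % (2 * m), Nat.mod_lt _ (by omega)⟩ : Fin (2 * m))))) :
    Function.Injective φ ∧
      ∑ᶠ w : WI, (X : Polynomial ℤ) ^ (csA.length (φ w)) =
        qint (X ^ m) 2 * qint (X ^ m) (2 * m + 1) := by
  classical
  -- the homomorphism ψ : WA →* Perm (Fin (2m+1))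
  have hlift : (CoxeterMatrix.Aₙ (2*m)).IsLiftable (fun i : Fin (2*m) => adj m i.1) := by
    intro i i'
    have hi := i.2
    have hi' := i'.2
    rcases eq_or_ne i i' with rfl | hne
    · have hM : (CoxeterMatrix.Aₙ (2*m)) i i = 1 := by simp [CoxeterMatrix.Aₙ]
      rw [hM, pow_one]
      show adj m i.1 * adj m i.1 = 1
      rw [adj_eq (by omega), Equiv.swap_mul_self]
    · have hvne : (i : ℕ) ≠ (i' : ℕ) := fun hc => hne (Fin.ext hc)
      by_cases hadj : (i' : ℕ) + 1 = i ∨ (i : ℕ) + 1 = i'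
      · have hM : (CoxeterMatrix.Aₙ (2*m)) i i' = 3 := by
          show (if i = i' then 1 else (if (i' : ℕ) + 1 = i ∨ (i : ℕ) + 1 = i' then 3 else 2)) = 3
          rw [if_neg hne, if_pos hadj]
        rw [hM]
        show (adj m i.1 * adj m i'.1) ^ 3 = 1
        rcases hadj with h | h
        · have hsub : (i : ℕ) = (i' : ℕ) + 1 := by omega
          rw [hsub]
          exact adj_braid' (by omega)
        · have hsub : (i' : ℕ) = (i : ℕ) + 1 := by omega
          rw [hsub]
          exact adj_braid (by omega)
      · have hM : (CoxeterMatrix.Aₙ (2*m)) i i' = 2 := by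
          show (if i = i' then 1 else (if (i' : ℕ) + 1 = i ∨ (i : ℕ) + 1 = i' then 3 else 2)) = 2
          rw [if_neg hne, if_neg hadj]
        rw [hM]
        push_neg at hadj
        show (adj m i.1 * adj m i'.1) ^ 2 = 1
        rw [adj_eq (by omega), adj_eq (by omega)]
        exact sq_eq_one_of_disjoint (m := m)
          (by simp only [ne_eq, Fin.mk.injEq]; omega)
          (by simp only [ne_eq, Fin.mk.injEq]; omega)
          (by simp only [ne_eq, Fin.mk.injEq]; omega)
          (by simp only [ne_eq, Fin.mk.injEq]; omega)
          (by simp only [ne_eq, Fin.mk.injEq]; omega)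
          (by simp only [ne_eq, Fin.mk.injEq]; omega)
  set ψ : WA →* Equiv.Perm (Fin (2*m+1)) :=
    csA.lift ⟨fun i : Fin (2*m) => adj m i.1, hlift⟩ with hψdef
  have hψs : ∀ i : Fin (2*m), ψ (csA.simple i) = adj m i.1 :=
    fun i => csA.lift_apply_simple hlift i
  have psi_wordProd : ∀ l : List (Fin (2*m)),
      ψ (csA.wordProd l) = (l.map (fun i : Fin (2*m) => adj m i.1)).prod := by
    intro l
    rw [CoxeterSystem.wordProd, map_list_prod, List.map_map]
    congr 1
    refine List.map_congr_left (fun i _ => ?_)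
    exact hψs i
  have hA0 : ψ (φ (csI.simple 0)) = blockP m 0 m := by
    rw [h1, psi_wordProd, blockP]
    congr 1
    rw [List.map_map]
    refine List.map_congr_left (fun j hj => ?_)
    rw [List.mem_range] at hj
    show adj m ((2*j) % (2*m)) = adj m (2*j+0)
    rw [Nat.mod_eq_of_lt (by omega)]
    norm_num
  have hB0 : ψ (φ (csI.simple 1)) = blockP m 1 m := by
    rw [h2, psi_wordProd, blockP]
    congr 1
    rw [List.map_map]
    refine List.map_congr_left (fun j hj => ?_)
    rw [List.mem_range] at hj
    show adj m ((2*j+1) % (2*m)) = adj m (2*j+1)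
    rw [Nat.mod_eq_of_lt (by omega)]
  -- main induction: explicit formulas and inversion numbers for images of alternating words
  have main : ∀ k, k ≤ 2*m+1 →
      (∀ x : Fin (2*m+1),
        ((ψ (φ (csI.wordProd (alternatingWord 0 1 k)))) x).1 = Pf m k x.1) ∧
      (∀ x : Fin (2*m+1),
        ((ψ (φ (csI.wordProd (alternatingWord 1 0 k)))) x).1 = Qf m k x.1) ∧
      invC (ψ (φ (csI.wordProd (alternatingWord 0 1 k)))) = m * k ∧
      invC (ψ (φ (csI.wordProd (alternatingWord 1 0 k)))) = m * k := by
    intro k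
    induction k with
    | zero =>
      intro _
      have e0 : ∀ i i' : Fin 2,
          ψ (φ (csI.wordProd (alternatingWord i i' 0))) = 1 := by
        intro i i'
        show ψ (φ (csI.wordProd [])) = 1
        rw [csI.wordProd_nil, map_one, map_one]
      refine ⟨fun x => ?_, fun x => ?_, ?_, ?_⟩
      · rw [e0, Equiv.Perm.one_apply, Pf_zero x.2]
      · rw [e0, Equiv.Perm.one_apply, Qf_zero x.2]
      · rw [e0, invC_one]; ring
      · rw [e0, invC_one]; ring
    | succ k ih =>
      intro hk1
      obtain ⟨hu, hv, hiu, hiv⟩ := ih (by omega)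
      have e1 : ψ (φ (csI.wordProd (alternatingWord 0 1 (k+1)))) =
          ψ (φ (csI.wordProd (alternatingWord 1 0 k))) * blockP m 1 m := by
        rw [alternatingWord_succ, csI.wordProd_concat, map_mul, map_mul, hB0]
      have e2 : ψ (φ (csI.wordProd (alternatingWord 1 0 (k+1)))) =
          ψ (φ (csI.wordProd (alternatingWord 0 1 k))) * blockP m 0 m := by
        rw [alternatingWord_succ, csI.wordProd_concat, map_mul, map_mul, hA0]
      have bP1 : ∀ x : Fin (2*m+1), ((blockP m 1 m) x).1 = Pf m 1 x.1 := by
        intro x; rw [blockP_apply (by omega), Pf_one x.2]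
      have bP0 : ∀ x : Fin (2*m+1), ((blockP m 0 m) x).1 = Qf m 1 x.1 := by
        intro x; rw [blockP_apply (by omega), Qf_one x.2]
      have hu' : ∀ x : Fin (2*m+1),
          ((ψ (φ (csI.wordProd (alternatingWord 0 1 (k+1))))) x).1 = Pf m (k+1) x.1 := by
        intro x
        rw [e1, Equiv.Perm.mul_apply, hv, bP1 x, ← Pf_rec (by omega) x.2]
      have hv' : ∀ x : Fin (2*m+1),
          ((ψ (φ (csI.wordProd (alternatingWord 1 0 (k+1))))) x).1 = Qf m (k+1) x.1 := by
        intro x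
        rw [e2, Equiv.Perm.mul_apply, hu, bP0 x, ← Qf_rec (by omega) x.2]
      refine ⟨hu', hv', ?_, ?_⟩
      · rw [e1, invC_mul_blockP _ (by omega) ?ascB, hiv]; ring
        case ascB =>
          intro j hj x y hx hy
          rw [hv x, hv y, hx, hy]
          have h := ascQ (m := m) (k := k) (by omega) hj
          rw [show 2*j+2 = 2*j+1+1 by omega] at h
          exact h
      · rw [e2, invC_mul_blockP _ (by omega) ?ascA, hiu]; ring
        case ascA =>
          intro j hj x y hx hy
          rw [hu x, hu y, hx, hy]
          have h := ascP (m := m) (k := k) (by omega) hj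
          rw [show 2*j+1 = 2*j+0+1 by omega, show 2*j = 2*j+0 by omega] at h
          exact h
  -- invC is a lower bound for length
  have inv_le : ∀ w : WA, invC (ψ w) ≤ csA.length w := by
    intro w
    obtain ⟨ω, hlen, rfl⟩ := csA.exists_reduced_word w
    rw [psi_wordProd]
    have hmm : ω.map (fun i : Fin (2*m) => adj m i.1) =
        (ω.map (fun i : Fin (2*m) => (i : ℕ))).map (adj m) := by
      rw [List.map_map]; rfl
    rw [hmm]
    have h2 := invC_prod_adj_le (m := m) (ω.map (fun i : Fin (2*m) => (i : ℕ)))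
      (by
        intro p hp
        rw [List.mem_map] at hp
        obtain ⟨i, -, rfl⟩ := hp
        have := i.2
        omega)
    rw [List.length_map] at h2
    have := hlen.eq
    omega
  -- upper bound for lengths of images
  obtain ⟨L0, hL0, hL0len⟩ : ∃ L, φ (csI.simple 0) = csA.wordProd L ∧ L.length = m :=
    ⟨_, h1, by simp⟩
  obtain ⟨L1, hL1, hL1len⟩ : ∃ L, φ (csI.simple 1) = csA.wordProd L ∧ L.length = m :=
    ⟨_, h2, by simp⟩
  have phi_word : ∀ ω : List (Fin 2), φ (csI.wordProd ω) =
      csA.wordProd (ω.flatMap (fun i => if i = 0 then L0 else L1)) := by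
    intro ω
    induction ω with
    | nil => simp
    | cons i ω ih =>
      rw [csI.wordProd_cons, map_mul, ih, List.flatMap_cons, csA.wordProd_append]
      congr 1
      fin_cases i
      · simpa using hL0
      · simpa using hL1
  have bind_len : ∀ ω : List (Fin 2),
      (ω.flatMap (fun i => if i = 0 then L0 else L1)).length = m * ω.length := by
    intro ω
    induction ω with
    | nil => simp
    | cons i ω ih =>
      rw [List.flatMap_cons, List.length_append, ih]
      have : (if i = 0 then L0 else L1).length = m := by
        fin_cases i <;> simp [hL0len, hL1len]
      rw [this, List.length_cons]
      ring
  have len_eq : ∀ k, k ≤ 2*m+1 →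
      csA.length (φ (csI.wordProd (alternatingWord 0 1 k))) = m * k ∧
      csA.length (φ (csI.wordProd (alternatingWord 1 0 k))) = m * k := by
    intro k hk
    obtain ⟨-, -, hiu, hiv⟩ := main k hk
    have up1 := csA.length_wordProd_le
      ((alternatingWord (0 : Fin 2) 1 k).flatMap (fun i => if i = 0 then L0 else L1))
    have up2 := csA.length_wordProd_le
      ((alternatingWord (1 : Fin 2) 0 k).flatMap (fun i => if i = 0 then L0 else L1))
    rw [bind_len, CoxeterSystem.length_alternatingWord] at up1 up2
    rw [← phi_word] at up1 up2
    have lo1 := inv_le (φ (csI.wordProd (alternatingWord 0 1 k)))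
    have lo2 := inv_le (φ (csI.wordProd (alternatingWord 1 0 k)))
    rw [hiu] at lo1
    rw [hiv] at lo2
    omega
  -- Coxeter matrix values on the I side
  have hM01 : (CoxeterMatrix.I (2*m-1)) 0 1 = 2*m+1 := by
    show (if (0 : Fin 2) = 1 then 1 else (2*m-1) + 2) = 2*m+1
    rw [if_neg (by decide)]
    omega
  have hM10 : (CoxeterMatrix.I (2*m-1)) 1 0 = 2*m+1 := by
    show (if (1 : Fin 2) = 0 then 1 else (2*m-1) + 2) = 2*m+1
    rw [if_neg (by decide)]
    omega
  have hbraid : csI.wordProd (alternatingWord 0 1 (2*m+1)) =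
      csI.wordProd (alternatingWord 1 0 (2*m+1)) := by
    have hb := csI.wordProd_braidWord_eq 0 1
    unfold CoxeterSystem.braidWord at hb
    rw [hM01, hM10] at hb
    exact hb
  have fin2 : ∀ a b c : Fin 2, a ≠ b → c ≠ b → c = a := by decide
  -- doubled letters are not reduced
  have not_red_concat2 : ∀ (l : List (Fin 2)) (i : Fin 2),
      ¬ csI.IsReduced ((l.concat i).concat i) := by
    intro l i hred
    have hprod : csI.wordProd ((l.concat i).concat i) = csI.wordProd l := by
      rw [csI.wordProd_concat, csI.wordProd_concat, mul_assoc,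
        csI.simple_mul_simple_self, mul_one]
    have hle := csI.length_wordProd_le l
    rw [CoxeterSystem.IsReduced, hprod] at hred
    simp only [List.length_concat] at hred
    omega
  -- every reduced word over two letters is an alternating word
  have alt_red : ∀ ω : List (Fin 2), csI.IsReduced ω →
      ∃ i i' : Fin 2, ω = alternatingWord i i' ω.length := by
    intro ω
    induction ω using List.reverseRecOn with
    | nil => exact fun _ => ⟨0, 1, rfl⟩
    | append_singleton l j ih =>
      intro hred
      have hlred : csI.IsReduced l := by
        have h := hred.take l.length
        rwa [List.take_left] at h
      obtain ⟨i, i', hl⟩ := ih hlred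
      rcases Nat.lt_or_ge l.length 1 with h0 | h1
      · have hnil : l = [] := List.eq_nil_of_length_eq_zero (by omega)
        subst hnil
        exact ⟨1, j, rfl⟩
      obtain ⟨n, hn⟩ : ∃ n, l.length = n + 1 := ⟨l.length - 1, by omega⟩
      have hlform : l = (alternatingWord i' i n).concat i' := by
        rw [hl, hn, alternatingWord_succ]
      have hji' : j ≠ i' := by
        rintro rfl
        apply not_red_concat2 (alternatingWord j i n) j
        have he : ((alternatingWord j i n).concat j).concat j = l ++ [j] := by
          rw [← hlform, List.concat_eq_append]
        rwa [he]
      rcases Nat.lt_or_ge n 1 with hn0 | hn1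
      · have hl1 : l = [i'] := by
          rw [hlform, show n = 0 by omega]
          rfl
        refine ⟨i', j, ?_⟩
        rw [hl1]
        rfl
      · have hii' : i ≠ i' := by
          rintro rfl
          obtain ⟨p, hp⟩ : ∃ p, n = p + 1 := ⟨n - 1, by omega⟩
          apply not_red_concat2 (alternatingWord i i p) i
          have he : ((alternatingWord i i p).concat i).concat i = l := by
            rw [hlform, hp, alternatingWord_succ]
          rwa [he]
        have hj : j = i := fin2 i i' j hii' hji'
        subst hj
        refine ⟨i', j, ?_⟩
        rw [List.length_append, List.length_singleton, hn,
          alternatingWord_succ, List.concat_eq_append, ← hn, ← hl]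
  -- enumeration of WI
  have enum : ∀ w : WI, ∃ k, k ≤ 2*m+1 ∧
      (w = csI.wordProd (alternatingWord 0 1 k) ∨
       w = csI.wordProd (alternatingWord 1 0 k)) := by
    intro w
    obtain ⟨ω, hred, rfl⟩ := csI.exists_reduced_word' w
    obtain ⟨i, i', hw⟩ := alt_red ω hred
    rcases eq_or_ne i i' with rfl | hne
    · have hlen1 : ω.length ≤ 1 := by
        by_contra hc
        push_neg at hc
        obtain ⟨p, hp⟩ : ∃ p, ω.length = p + 2 := ⟨ω.length - 2, by omega⟩
        apply not_red_concat2 (alternatingWord i i p) i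
        have he : ((alternatingWord i i p).concat i).concat i = ω := by
          rw [hw, hp, alternatingWord_succ, alternatingWord_succ]
        rwa [he]
      rcases Nat.lt_or_ge ω.length 1 with h0 | h1
      · have hnil : ω = [] := List.eq_nil_of_length_eq_zero (by omega)
        exact ⟨0, by omega, Or.inl (by rw [hnil]; rfl)⟩
      · have hone : ω.length = 1 := by omega
        have hωi : ω = [i] := by rw [hw, hone]; rfl
        by_cases hi0 : i = 0
        · refine ⟨1, by omega, Or.inr ?_⟩
          rw [hωi, hi0]
          rfl
        · have : i = 1 := by
            have := fin2 1 0 i (by decide) (by simpa using hi0)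
            exact this
          refine ⟨1, by omega, Or.inl ?_⟩
          rw [hωi, this]
          rfl
    · have hMv : (CoxeterMatrix.I (2*m-1)) i i' = 2*m+1 := by
        fin_cases i <;> fin_cases i' <;>
          first
          | exact absurd rfl hne
          | exact hM01
          | exact hM10
      have hk : ω.length ≤ 2*m+1 := by
        by_contra hc
        push_neg at hc
        refine csI.not_isReduced_alternatingWord i i' (m := ω.length)
          (by rw [hMv]; omega) (by rw [hMv]; omega) ?_
        rwa [hw] at hred
      have hcases : ∀ a b : Fin 2, a ≠ b → (a = 0 ∧ b = 1) ∨ (a = 1 ∧ b = 0) := by decide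
      rcases hcases i i' hne with ⟨rfl, rfl⟩ | ⟨rfl, rfl⟩
      · refine ⟨ω.length, hk, Or.inl ?_⟩
        conv_lhs => rw [hw]
      · refine ⟨ω.length, hk, Or.inr ?_⟩
        conv_lhs => rw [hw]
  -- distinctness of the two families away from the ends
  have phi_uv_ne : ∀ k, 1 ≤ k → k ≤ 2*m →
      φ (csI.wordProd (alternatingWord 0 1 k)) ≠
      φ (csI.wordProd (alternatingWord 1 0 k)) := by
    intro k hk1 hk2 hc
    obtain ⟨hu, hv, -, -⟩ := main k (by omega)
    have hx : Pf m k 0 = Qf m k 0 := by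
      have ha := hu ⟨0, by omega⟩
      have hb := hv ⟨0, by omega⟩
      rw [hc] at ha
      rw [hb] at ha
      exact ha.symm
    exact PQ_ne hk1 hk2 hx
  -- injectivity
  have hinj : Function.Injective φ := by
    intro w w' heq
    obtain ⟨k, hk, hw⟩ := enum w
    obtain ⟨k', hk', hw'⟩ := enum w'
    have e1 : csA.length (φ w) = m * k := by
      rcases hw with rfl | rfl
      exacts [(len_eq k hk).1, (len_eq k hk).2]
    have e2 : csA.length (φ w') = m * k' := by
      rcases hw' with rfl | rfl
      exacts [(len_eq k' hk').1, (len_eq k' hk').2]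
    rw [heq, e2] at e1
    have hkk' : k' = k := Nat.eq_of_mul_eq_mul_left (by omega) e1
    rw [hkk'] at hw'
    rcases hw with rfl | rfl <;> rcases hw' with rfl | rfl
    · rfl
    · rcases Nat.eq_zero_or_pos k with rfl | hk1
      · rfl
      · rcases Nat.lt_or_ge k (2*m+1) with hlt | hge
        · exact absurd heq (phi_uv_ne k (by omega) (by omega))
        · have hk2 : k = 2*m+1 := by omega
          subst hk2
          exact hbraid
    · rcases Nat.eq_zero_or_pos k with rfl | hk1
      · rfl
      · rcases Nat.lt_or_ge k (2*m+1) with hlt | hge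
        · exact absurd heq.symm (phi_uv_ne k (by omega) (by omega))
        · have hk2 : k = 2*m+1 := by omega
          subst hk2
          exact hbraid.symm
    · rfl
  refine ⟨hinj, ?_⟩
  -- finiteness
  have hfin : Finite WI := by
    refine Finite.of_surjective
      (fun p : Fin 2 × Fin (2*m+2) =>
        if p.1 = 0 then csI.wordProd (alternatingWord 0 1 p.2.1)
        else csI.wordProd (alternatingWord 1 0 p.2.1)) ?_
    intro w
    obtain ⟨k, hk, hw | hw⟩ := enum w
    · exact ⟨(0, ⟨k, by omega⟩), by simpa using hw.symm⟩
    · exact ⟨(1, ⟨k, by omega⟩), by simpa using hw.symm⟩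
  letI : Fintype WI := Fintype.ofFinite WI
  rw [finsum_eq_sum_of_fintype]
  have huniv : (Finset.univ : Finset WI) =
      (Finset.range (2*m+2)).image (fun k => csI.wordProd (alternatingWord 0 1 k)) ∪
      (Finset.Icc 1 (2*m)).image (fun k => csI.wordProd (alternatingWord 1 0 k)) := by
    symm
    rw [Finset.eq_univ_iff_forall]
    intro w
    rw [Finset.mem_union]
    obtain ⟨k, hk, hw | hw⟩ := enum w
    · exact Or.inl (Finset.mem_image.2 ⟨k, Finset.mem_range.2 (by omega), hw.symm⟩)
    · rcases Nat.eq_zero_or_pos k with rfl | hk1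
      · exact Or.inl (Finset.mem_image.2 ⟨0, Finset.mem_range.2 (by omega), hw.symm⟩)
      · rcases Nat.lt_or_ge k (2*m+1) with hlt | hge
        · exact Or.inr (Finset.mem_image.2 ⟨k, Finset.mem_Icc.2 (by omega), hw.symm⟩)
        · have hk2 : k = 2*m+1 := by omega
          subst hk2
          refine Or.inl (Finset.mem_image.2 ⟨2*m+1, Finset.mem_range.2 (by omega), ?_⟩)
          rw [hbraid]
          exact hw.symm
  rw [huniv, Finset.sum_union ?disj, Finset.sum_image ?injU, Finset.sum_image ?injV]
  case injU =>
    intro k hk k' hk' hE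
    rw [Finset.mem_coe, Finset.mem_range] at hk hk'
    have hL := congrArg (fun z => csA.length (φ z)) hE
    simp only at hL
    rw [(len_eq k (by omega)).1, (len_eq k' (by omega)).1] at hL
    exact Nat.eq_of_mul_eq_mul_left (by omega) hL
  case injV =>
    intro k hk k' hk' hE
    rw [Finset.mem_coe, Finset.mem_Icc] at hk hk'
    have hL := congrArg (fun z => csA.length (φ z)) hE
    simp only at hL
    rw [(len_eq k (by omega)).2, (len_eq k' (by omega)).2] at hL
    exact Nat.eq_of_mul_eq_mul_left (by omega) hL
  case disj =>
    rw [Finset.disjoint_left]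
    intro w hwu hwv
    rw [Finset.mem_image] at hwu hwv
    obtain ⟨k, hk, rfl⟩ := hwu
    obtain ⟨k', hk', hE⟩ := hwv
    rw [Finset.mem_range] at hk
    rw [Finset.mem_Icc] at hk'
    have hL := congrArg (fun z => csA.length (φ z)) hE
    rw [(len_eq k' (by omega)).2, (len_eq k (by omega)).1] at hL
    have hkk : k' = k := Nat.eq_of_mul_eq_mul_left (by omega) hL
    subst hkk
    exact phi_uv_ne k' (by omega) (by omega) (congrArg φ hE).symm
  have s1 : ∑ k ∈ Finset.range (2*m+2),
        (X : Polynomial ℤ) ^ (csA.length (φ (csI.wordProd (alternatingWord 0 1 k)))) =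
      ∑ k ∈ Finset.range (2*m+2), ((X : Polynomial ℤ)^m)^k := by
    refine Finset.sum_congr rfl (fun k hk => ?_)
    rw [Finset.mem_range] at hk
    rw [(len_eq k (by omega)).1, pow_mul]
  have s2 : ∑ k ∈ Finset.Icc 1 (2*m),
        (X : Polynomial ℤ) ^ (csA.length (φ (csI.wordProd (alternatingWord 1 0 k)))) =
      ∑ k ∈ Finset.Icc 1 (2*m), ((X : Polynomial ℤ)^m)^k := by
    refine Finset.sum_congr rfl (fun k hk => ?_)
    rw [Finset.mem_Icc] at hk
    rw [(len_eq k (by omega)).2, pow_mul]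
  rw [s1, s2]
  have e2 : Finset.range (2*m+1) = insert 0 (Finset.Icc 1 (2*m)) := by
    ext x
    simp only [Finset.mem_range, Finset.mem_insert, Finset.mem_Icc]
    omega
  have e3 : (∑ k ∈ Finset.range (2*m+1), ((X : Polynomial ℤ)^m)^k) =
      1 + ∑ k ∈ Finset.Icc 1 (2*m), ((X : Polynomial ℤ)^m)^k := by
    rw [e2, Finset.sum_insert (by simp), pow_zero]
  have e1 : (∑ k ∈ Finset.range (2*m+2), ((X : Polynomial ℤ)^m)^k) =
      (∑ k ∈ Finset.range (2*m+1), ((X : Polynomial ℤ)^m)^(k+1)) + 1 := by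
    rw [show 2*m+2 = 2*m+1+1 by omega,
      Finset.sum_range_succ' (fun k => ((X : Polynomial ℤ)^m)^k) (2*m+1), pow_zero]
  have e4 : qint ((X : Polynomial ℤ)^m) 2 = 1 + (X : Polynomial ℤ)^m := by
    simp [qint, Finset.sum_range_succ]
  have e5 : qint ((X : Polynomial ℤ)^m) (2*m+1) =
      ∑ k ∈ Finset.range (2*m+1), ((X : Polynomial ℤ)^m)^k := rfl
  rw [e1, e4, e5, add_mul, one_mul, Finset.mul_sum]
  simp only [← pow_succ']
  rw [e3]
  ring
end

section
/- Let \widehat{W} be a folding subgroup of a Coxeter system (W,S) arising from an admissible partition \widehat{S} of S, with generators R = \{r_I : I \in \widehat{S}\} where r_I is the longest element of the finite parabolic W_I, and let \phi : \widehat{W} \to W be the inclusion. If w = r_{i_1} \cdots r_{i_k} is a reduced expression in the generators R, then \ell(\phi(w)) = \sum_{j=1}^k \ell(\phi(r_{i_j})), where \ell is the length function of W. -/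
/-!
Write `N w` for the set of right inversions of `w`. Bourbaki's permutation representation of `W`
on `W × ZMod 2` shows that `N w` consists of the entries of the right inversion sequence of any
reduced word for `w` (strong exchange), so that `ℓ w = |N w|`, and that `N (x * y)` is the
symmetric difference of `N y` and `y⁻¹ (N x) y`. Hence `N (r I)` is the set of all reflections of
`W_I`, and an element with only ascents (only descents) on `I` has none (all) of them in `N w`.

Induct on the reduced word. Appending `r I` to `v = r I₁ ⋯ r I_k` adds `ℓ (r I)` to the length
when `v` has only ascents on `I`. Otherwise some `s i`, `i ∈ I`, lies in `N v`, and the symmetric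
difference formula places it in one factor: `G s_i G⁻¹ ∈ N (r J)`, where `G` is the product of the
later factors. By admissibility, membership in `N x` is constant on the reflections of `W_I` for
every `x` in the folding subgroup; this gives `G W_I G⁻¹ ⊆ W_J` and then `G (r I) G⁻¹ = r J`, so
deleting the factors `r J` and `r I` yields a shorter word with the same product.
-/

namespace CoxeterSystem

variable {B W : Type*} [Group W] {M : CoxeterMatrix B} (cs : CoxeterSystem M W)

section ReflParity

variable [DecidableEq W]

def reflParityPerm (i : B) : Equiv.Perm (W × ZMod 2) :=
  Function.Involutive.toPerm
    (fun p => (cs.simple i * p.1 * cs.simple i, p.2 + if p.1 = cs.simple i then 1 else 0)) <| by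
    rintro ⟨x, ε⟩
    have hx : cs.simple i * x * cs.simple i = cs.simple i ↔ x = cs.simple i := by
      constructor
      · intro h
        simpa [mul_assoc] using congrArg (fun z => cs.simple i * z * cs.simple i) h
      · rintro rfl
        simp
    by_cases h : x = cs.simple i <;> simp [hx, h, add_assoc, ← mul_assoc]; decide

theorem reflParityPerm_apply (i : B) (x : W) (ε : ZMod 2) :
    cs.reflParityPerm i (x, ε) =
      (cs.simple i * x * cs.simple i, ε + if x = cs.simple i then 1 else 0) :=
  rfl

theorem reflParityPerm_mul_pow (i j : B) (n : ℕ) (x : W) (ε : ZMod 2) :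
    ((cs.reflParityPerm i * cs.reflParityPerm j) ^ n) (x, ε) =
      ((cs.simple i * cs.simple j) ^ n * x * ((cs.simple i * cs.simple j)⁻¹) ^ n,
        ε + ∑ k ∈ Finset.range (2 * n),
          if x = (cs.simple i * cs.simple j)⁻¹ ^ k * cs.simple j then 1 else 0) := by
  have hstep (x : W) : cs.simple i * (cs.simple j * x * cs.simple j) * cs.simple i =
      (cs.simple i * cs.simple j) * x * (cs.simple i * cs.simple j)⁻¹ := by
    simp [mul_assoc]
  have hsj : cs.simple j * (cs.simple i * cs.simple j) =
      (cs.simple i * cs.simple j)⁻¹ * cs.simple j := by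
    simp [mul_assoc]
  have hsi (x : W) : cs.simple j * x * cs.simple j = cs.simple i ↔
      x = (cs.simple i * cs.simple j)⁻¹ * cs.simple j := by
    rw [mul_inv_rev, cs.inv_simple, cs.inv_simple]
    constructor
    · intro h
      rw [← h]
      simp [mul_assoc]
    · rintro rfl
      simp [mul_assoc]
  induction n generalizing x ε with
  | zero => simp
  | succ n ih =>
    rw [pow_succ, Equiv.Perm.mul_apply, Equiv.Perm.mul_apply, reflParityPerm_apply,
      reflParityPerm_apply, ih, hstep]
    simp only [hsi]
    generalize cs.simple i * cs.simple j = a at hsj ⊢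
    -- conjugation by `a` shifts the reflections `a⁻¹ ^ k * s j` by two
    have hshift (k : ℕ) : a * x * a⁻¹ = a⁻¹ ^ k * cs.simple j ↔
        x = a⁻¹ ^ (k + 2) * cs.simple j := by
      have hconj : a⁻¹ * (a⁻¹ ^ k * cs.simple j) * a = a⁻¹ ^ (k + 2) * cs.simple j := by
        rw [mul_assoc, mul_assoc, hsj, ← mul_assoc, ← mul_assoc, ← pow_succ', ← pow_succ]
      rw [← hconj]
      constructor
      · intro h
        rw [← h]
        group
      · rintro rfl
        group
    simp only [hshift]
    rw [Prod.mk.injEq, pow_succ, pow_succ']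
    refine ⟨by group, ?_⟩
    rw [show 2 * (n + 1) = 2 * n + 1 + 1 by ring, Finset.sum_range_succ', Finset.sum_range_succ']
    simp only [pow_zero, one_mul, zero_add, pow_one]
    abel

theorem isLiftable_reflParityPerm : M.IsLiftable cs.reflParityPerm := by
  intro i j
  ext ⟨x, ε⟩ : 1
  rw [reflParityPerm_mul_pow, inv_pow, simple_mul_simple_pow, inv_one, one_mul, mul_one,
    Equiv.Perm.one_apply, Prod.mk.injEq, add_eq_left, two_mul, Finset.sum_range_add]
  refine ⟨rfl, ?_⟩
  -- the reflections `(s i * s j)⁻¹ ^ k * s j` are periodic in `k` with period `M i j`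
  simp only [pow_add, inv_pow, simple_mul_simple_pow, inv_one, one_mul]
  rw [← two_mul, show (2 : ZMod 2) = 0 from rfl, zero_mul]

def reflParityRep : W →* Equiv.Perm (W × ZMod 2) :=
  cs.lift ⟨cs.reflParityPerm, cs.isLiftable_reflParityPerm⟩

theorem reflParityRep_wordProd (ω : List B) (x : W) (ε : ZMod 2) :
    cs.reflParityRep (cs.wordProd ω) (x, ε) =
      (cs.wordProd ω * x * (cs.wordProd ω)⁻¹, ε + (cs.rightInvSeq ω).count x) := by
  induction ω generalizing x ε with
  | nil => simp
  | cons i ω ih =>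
    have hx : cs.wordProd ω * x * (cs.wordProd ω)⁻¹ = cs.simple i ↔
        (cs.wordProd ω)⁻¹ * cs.simple i * cs.wordProd ω = x := by
      constructor <;> intro h <;> rw [← h] <;> group
    rw [wordProd_cons, map_mul, Equiv.Perm.mul_apply, ih, reflParityRep, lift_apply_simple,
      reflParityPerm_apply, rightInvSeq, List.count_cons]
    simp only [beq_iff_eq, hx, Prod.mk.injEq, mul_inv_rev, inv_simple]
    constructor
    · group
    · split_ifs <;> push_cast <;> ring

/-- The parity of the number of occurrences of `t` in the right inversion sequence of any
word for `w` (`reflParity_wordProd`). -/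
def reflParity (w t : W) : ZMod 2 := (cs.reflParityRep w (t, 0)).2

theorem reflParity_wordProd (ω : List B) (t : W) :
    cs.reflParity (cs.wordProd ω) t = (cs.rightInvSeq ω).count t := by
  rw [reflParity, reflParityRep_wordProd, zero_add]

theorem reflParityRep_apply (w x : W) (ε : ZMod 2) :
    cs.reflParityRep w (x, ε) = (w * x * w⁻¹, ε + cs.reflParity w x) := by
  obtain ⟨ω, rfl⟩ := cs.wordProd_surjective w
  rw [reflParityRep_wordProd, reflParity_wordProd]

theorem reflParity_mul (u v t : W) :
    cs.reflParity (u * v) t = cs.reflParity v t + cs.reflParity u (v * t * v⁻¹) := by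
  have h := congrArg Prod.snd (DFunLike.congr_fun (map_mul cs.reflParityRep u v) (t, 0))
  rw [Equiv.Perm.mul_apply, reflParityRep_apply, reflParityRep_apply, reflParityRep_apply] at h
  simpa [add_comm] using h

theorem reflParity_inv (w x : W) : cs.reflParity w⁻¹ (w * x * w⁻¹) = cs.reflParity w x := by
  have h := cs.reflParity_mul w⁻¹ w x
  rw [inv_mul_cancel, ← cs.wordProd_nil, reflParity_wordProd, rightInvSeq_nil, List.count_nil,
    Nat.cast_zero] at h
  generalize cs.reflParity w x = a, cs.reflParity w⁻¹ (w * x * w⁻¹) = b at h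
  revert a b
  decide

theorem reflParity_self {t : W} (ht : cs.IsReflection t) : cs.reflParity t t = 1 := by
  obtain ⟨w, i, rfl⟩ := ht
  have hsi : cs.reflParity (cs.simple i) (cs.simple i) = 1 := by
    simpa using cs.reflParity_wordProd [i] (cs.simple i)
  rw [reflParity_mul, reflParity_inv, inv_inv, reflParity_mul,
    show w⁻¹ * (w * cs.simple i * w⁻¹) * w = cs.simple i by group, inv_simple,
    simple_mul_simple_self, one_mul, hsi]
  generalize cs.reflParity w (cs.simple i) = a
  revert a
  decide

theorem mem_rightInvSeq_of_reflParity_eq_one {ω : List B} {t : W}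
    (h : cs.reflParity (cs.wordProd ω) t = 1) : t ∈ cs.rightInvSeq ω := by
  by_contra hmem
  rw [reflParity_wordProd, List.count_eq_zero.mpr hmem, Nat.cast_zero] at h
  exact zero_ne_one h

theorem isRightInversion_of_reflParity_eq_one {w t : W} (h : cs.reflParity w t = 1) :
    cs.IsRightInversion w t := by
  obtain ⟨ω, hω, rfl⟩ := cs.exists_isReduced w
  exact cs.isRightInversion_of_mem_rightInvSeq hω (cs.mem_rightInvSeq_of_reflParity_eq_one h)

theorem reflParity_eq_one_iff {w t : W} (ht : cs.IsReflection t) :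
    cs.reflParity w t = 1 ↔ cs.IsRightInversion w t := by
  refine ⟨cs.isRightInversion_of_reflParity_eq_one, fun h => ?_⟩
  have hw : w * t * t = w := by rw [mul_assoc, ht.mul_self, mul_one]
  have hwt : cs.reflParity (w * t) t ≠ 1 := fun h' => by
    have := (cs.isRightInversion_of_reflParity_eq_one h').2
    rw [hw] at this
    exact absurd h.2 this.not_gt
  rw [← hw, reflParity_mul, reflParity_self cs ht]
  simp only [mul_inv_cancel_right]
  generalize cs.reflParity (w * t) t = a at hwt
  revert a
  decide

end ReflParity

theorem IsReduced.mem_rightInvSeq_iff {ω : List B} (hω : cs.IsReduced ω) {t : W} :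
    t ∈ cs.rightInvSeq ω ↔ cs.IsRightInversion (cs.wordProd ω) t := by
  classical
  refine ⟨cs.isRightInversion_of_mem_rightInvSeq hω, fun h => ?_⟩
  exact cs.mem_rightInvSeq_of_reflParity_eq_one ((reflParity_eq_one_iff cs h.1).mpr h)

def rightInversions (w : W) : Set W := {t | cs.IsRightInversion w t}

theorem rightInversions_wordProd {ω : List B} (hω : cs.IsReduced ω) :
    cs.rightInversions (cs.wordProd ω) = {t | t ∈ cs.rightInvSeq ω} := by
  classical
  ext t
  exact (hω.mem_rightInvSeq_iff cs).symm

theorem length_eq_ncard_rightInversions (w : W) : cs.length w = (cs.rightInversions w).ncard := by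
  classical
  obtain ⟨ω, hω, rfl⟩ := cs.exists_isReduced w
  rw [rightInversions_wordProd cs hω, ← List.coe_toFinset, Set.ncard_coe_finset,
    List.toFinset_card_of_nodup (hω.nodup_rightInvSeq), length_rightInvSeq, hω.eq]

theorem finite_rightInversions (w : W) : (cs.rightInversions w).Finite := by
  obtain ⟨ω, hω, rfl⟩ := cs.exists_isReduced w
  rw [rightInversions_wordProd cs hω]
  exact List.finite_toSet _

theorem rightInversions_mul (x y : W) :
    cs.rightInversions (x * y) =
      symmDiff (cs.rightInversions y) (MulAut.conj y ⁻¹' cs.rightInversions x) := by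
  classical
  ext t
  simp only [Set.mem_symmDiff, Set.mem_preimage, MulAut.conj_apply, rightInversions,
    Set.mem_ofPred_eq]
  by_cases ht : cs.IsReflection t
  · rw [← reflParity_eq_one_iff cs ht, ← reflParity_eq_one_iff cs ht,
      ← reflParity_eq_one_iff cs (ht.conj y), reflParity_mul]
    generalize cs.reflParity y t = a, cs.reflParity x (y * t * y⁻¹) = b
    revert a b
    decide
  · simp [IsRightInversion, ht, isReflection_conj_iff]

theorem exists_sublist_of_not_isReduced {ω : List B} (h : ¬cs.IsReduced ω) :
    ∃ ω' : List B, ω'.Sublist ω ∧ ω'.length + 2 = ω.length ∧ cs.wordProd ω' = cs.wordProd ω := by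
  induction ω using List.reverseRecOn with
  | nil => exact absurd (by simp [IsReduced]) h
  | append_singleton ω b ih =>
    by_cases hω : cs.IsReduced ω
    · have hinv : cs.IsRightInversion (cs.wordProd ω) (cs.simple b) := by
        refine ⟨cs.isReflection_simple b, ?_⟩
        rcases cs.length_mul_simple (cs.wordProd ω) b with h' | h'
        · refine absurd ?_ h
          rw [IsReduced, wordProd_append, wordProd_singleton, h', hω.eq, List.length_append,
            List.length_singleton]
        · omega
      obtain ⟨j, hj, hjb⟩ := List.getElem_of_mem ((hω.mem_rightInvSeq_iff cs).mpr hinv)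
      rw [length_rightInvSeq] at hj
      refine ⟨ω.eraseIdx j, (List.eraseIdx_sublist _ _).trans (List.sublist_append_left _ _),
        ?_, ?_⟩
      · rw [List.length_append, List.length_singleton, ← List.length_eraseIdx_add_one hj]
      · rw [← wordProd_mul_getD_rightInvSeq, List.getD_eq_getElem _ _ (by simpa using hj), hjb,
          wordProd_append, wordProd_singleton]
    · obtain ⟨ω', hsub, hlen, hprod⟩ := ih hω
      refine ⟨ω' ++ [b], hsub.append_right _, ?_, ?_⟩
      · simp only [List.length_append, List.length_singleton]
        omega
      · rw [wordProd_append, wordProd_append, hprod]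

theorem exists_isReduced_sublist (ω : List B) :
    ∃ ω' : List B, ω'.Sublist ω ∧ cs.IsReduced ω' ∧ cs.wordProd ω' = cs.wordProd ω := by
  induction h : ω.length using Nat.strong_induction_on generalizing ω with
  | _ n ih =>
    by_cases hω : cs.IsReduced ω
    · exact ⟨ω, .refl _, hω, rfl⟩
    · obtain ⟨ω', hsub, hlen, hprod⟩ := cs.exists_sublist_of_not_isReduced hω
      obtain ⟨ω'', hsub', hred, hprod'⟩ := ih ω'.length (by omega) ω' rfl
      exact ⟨ω'', hsub'.trans hsub, hred, hprod'.trans hprod⟩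

def parabolic (I : Set B) : Subgroup W := Subgroup.closure (cs.simple '' I)

variable {cs} {I : Set B}

theorem simple_mem_parabolic {i : B} (hi : i ∈ I) : cs.simple i ∈ cs.parabolic I :=
  Subgroup.subset_closure ⟨i, hi, rfl⟩

theorem wordProd_mem_parabolic {ω : List B} (h : ∀ b ∈ ω, b ∈ I) : cs.wordProd ω ∈ cs.parabolic I :=
  Subgroup.list_prod_mem _ (by simpa using fun b hb => simple_mem_parabolic (h b hb))

theorem exists_word_of_mem_parabolic {u : W} (hu : u ∈ cs.parabolic I) :
    ∃ ω : List B, (∀ b ∈ ω, b ∈ I) ∧ cs.wordProd ω = u := by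
  induction hu using Subgroup.closure_induction with
  | mem x hx =>
    obtain ⟨i, hi, rfl⟩ := hx
    exact ⟨[i], by simpa using hi, wordProd_singleton cs i⟩
  | one => exact ⟨[], by simp, wordProd_nil cs⟩
  | mul x y _ _ ihx ihy =>
    obtain ⟨ω₁, h₁, rfl⟩ := ihx
    obtain ⟨ω₂, h₂, rfl⟩ := ihy
    exact ⟨ω₁ ++ ω₂, by simpa using fun b hb => hb.elim (h₁ b) (h₂ b), wordProd_append cs _ _⟩
  | inv x _ ih =>
    obtain ⟨ω, h, rfl⟩ := ih
    exact ⟨ω.reverse, by simpa using h, wordProd_reverse cs ω⟩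

theorem exists_isReduced_of_mem_parabolic {u : W} (hu : u ∈ cs.parabolic I) :
    ∃ ω : List B, (∀ b ∈ ω, b ∈ I) ∧ cs.IsReduced ω ∧ cs.wordProd ω = u := by
  obtain ⟨ω, hω, rfl⟩ := exists_word_of_mem_parabolic hu
  obtain ⟨ω', hsub, hred, hprod⟩ := cs.exists_isReduced_sublist ω
  exact ⟨ω', fun b hb => hω b (hsub.subset hb), hred, hprod⟩

theorem rightInvSeq_subset_parabolic {ω : List B} (h : ∀ b ∈ ω, b ∈ I) :
    ∀ t ∈ cs.rightInvSeq ω, t ∈ cs.parabolic I := by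
  induction ω with
  | nil => simp
  | cons i ω ih =>
    simp only [List.forall_mem_cons] at h
    simp only [rightInvSeq, List.forall_mem_cons]
    have hω : cs.wordProd ω ∈ cs.parabolic I := wordProd_mem_parabolic h.2
    exact ⟨mul_mem (mul_mem (inv_mem hω) (simple_mem_parabolic h.1)) hω, ih h.2⟩

theorem rightInversions_subset_parabolic {x : W} (hx : x ∈ cs.parabolic I) :
    cs.rightInversions x ⊆ cs.parabolic I := by
  obtain ⟨ω, hω, hred, rfl⟩ := exists_isReduced_of_mem_parabolic hx
  rw [rightInversions_wordProd cs hred]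
  exact rightInvSeq_subset_parabolic hω

theorem exists_rightDescent_of_mem_parabolic {u : W} (hu : u ∈ cs.parabolic I) (hu1 : u ≠ 1) :
    ∃ i ∈ I, cs.length (u * cs.simple i) + 1 = cs.length u := by
  obtain ⟨ω, hω, hred, rfl⟩ := exists_isReduced_of_mem_parabolic hu
  obtain ⟨ω', i, rfl⟩ := (List.eq_nil_or_concat' ω).resolve_left (by rintro rfl; simp at hu1)
  refine ⟨i, hω i (by simp), ?_⟩
  refine (cs.length_mul_simple _ i).resolve_left fun h => ?_
  have hle := cs.length_wordProd_le ω'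
  rw [hred.eq, wordProd_append, wordProd_singleton, simple_mul_simple_cancel_right,
    List.length_append, List.length_singleton] at h
  omega

theorem length_mul_of_disjoint {w u : W}
    (hw : Disjoint (cs.rightInversions w) (cs.parabolic I : Set W)) (hu : u ∈ cs.parabolic I) :
    cs.length (w * u) = cs.length w + cs.length u := by
  have hconj := (MulAut.conj u).injective
  have hdisj : Disjoint (cs.rightInversions u) (MulAut.conj u ⁻¹' cs.rightInversions w) := by
    refine Set.disjoint_left.mpr fun t htu htw => Set.disjoint_left.mp hw htw ?_
    have ht := rightInversions_subset_parabolic hu htu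
    exact mul_mem (mul_mem hu ht) (inv_mem hu)
  rw [length_eq_ncard_rightInversions, rightInversions_mul, hdisj.symmDiff_eq_sup]
  refine (Set.ncard_union_eq hdisj (cs.finite_rightInversions u)
    ((cs.finite_rightInversions w).preimage hconj.injOn)).trans ?_
  rw [Set.ncard_preimage_of_injective_subset_range hconj (by simp),
    ← length_eq_ncard_rightInversions, ← length_eq_ncard_rightInversions, add_comm]

theorem exists_disjoint_mul_eq (w : W) (I : Set B) :
    ∃ w₀, Disjoint (cs.rightInversions w₀) (cs.parabolic I : Set W) ∧
      ∃ u ∈ cs.parabolic I, w₀ * u = w := by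
  classical
  have hex : ∃ n, ∃ u ∈ cs.parabolic I, cs.length (w * u) = n := ⟨_, 1, one_mem _, rfl⟩
  obtain ⟨u, hu, hmin⟩ := Nat.find_spec hex
  refine ⟨w * u, Set.disjoint_left.mpr fun t ht htI => ?_, u⁻¹, inv_mem hu, by group⟩
  have hle := Nat.find_min' hex ⟨u * t, mul_mem hu htI, rfl⟩
  have hlt := ht.2
  rw [mul_assoc] at hlt
  omega

theorem disjoint_rightInversions_of_forall_ascent {w : W}
    (h : ∀ i ∈ I, cs.length (w * cs.simple i) = cs.length w + 1) :
    Disjoint (cs.rightInversions w) (cs.parabolic I : Set W) := by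
  obtain ⟨w₀, hw₀, u, hu, rfl⟩ := cs.exists_disjoint_mul_eq w I
  obtain rfl : u = 1 := by
    by_contra hu1
    obtain ⟨i, hi, hdesc⟩ := exists_rightDescent_of_mem_parabolic hu hu1
    have hasc := h i hi
    rw [mul_assoc, length_mul_of_disjoint hw₀ (mul_mem hu (simple_mem_parabolic hi)),
      length_mul_of_disjoint hw₀ hu] at hasc
    omega
  rwa [mul_one]

variable (cs) in
def parabolicReflections (I : Set B) : Set W := {t | cs.IsReflection t ∧ t ∈ cs.parabolic I}

variable (cs) in
def IsLongest (I : Set B) (w : W) : Prop :=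
  w ∈ cs.parabolic I ∧ ∀ u ∈ cs.parabolic I, cs.length u ≤ cs.length w

namespace IsLongest

variable {w : W}

theorem rightInversions_eq (hw : cs.IsLongest I w) :
    cs.rightInversions w = cs.parabolicReflections I := by
  ext t
  refine ⟨fun ht => ⟨ht.1, rightInversions_subset_parabolic hw.1 ht⟩, fun ⟨ht, htI⟩ => ⟨ht, ?_⟩⟩
  have := hw.2 _ (mul_mem hw.1 htI)
  have := ht.length_mul_left_ne w
  omega

theorem length_mul_add_length (hw : cs.IsLongest I w) {v : W} (hv : v ∈ cs.parabolic I) :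
    cs.length (v * w) + cs.length v = cs.length w := by
  have hconj := (MulAut.conj w).injective
  have hsub : MulAut.conj w ⁻¹' cs.rightInversions v ⊆ cs.rightInversions w := by
    intro t ht
    have hvI := rightInversions_subset_parabolic hv ht
    rw [hw.rightInversions_eq]
    refine ⟨(cs.isReflection_conj_iff w t).mp ht.1, ?_⟩
    simpa [mul_assoc] using mul_mem (mul_mem (inv_mem hw.1) hvI) hw.1
  rw [length_eq_ncard_rightInversions, rightInversions_mul, symmDiff_of_ge hsub,
    cs.length_eq_ncard_rightInversions v,
    ← Set.ncard_preimage_of_injective_subset_range (s := cs.rightInversions v) hconj (by simp),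
    Set.ncard_sdiff_add_ncard_of_subset hsub (cs.finite_rightInversions w),
    ← length_eq_ncard_rightInversions]

theorem mul_self (hw : cs.IsLongest I w) : w * w = 1 := by
  have := hw.length_mul_add_length hw.1
  exact cs.length_eq_zero_iff.mp (by omega)

theorem length_mul_add_length' (hw : cs.IsLongest I w) {v : W} (hv : v ∈ cs.parabolic I) :
    cs.length (w * v) + cs.length v = cs.length w := by
  rw [← cs.length_inv (w * v), mul_inv_rev, inv_eq_of_mul_eq_one_right hw.mul_self,
    ← cs.length_inv v]
  exact hw.length_mul_add_length (inv_mem hv)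

theorem eq_of_forall_descent (hw : cs.IsLongest I w) {u : W} (hu : u ∈ cs.parabolic I)
    (h : ∀ i ∈ I, cs.length (u * cs.simple i) + 1 = cs.length u) : u = w := by
  by_contra hne
  have hy : w * u ∈ cs.parabolic I := mul_mem hw.1 hu
  have hy1 : w * u ≠ 1 := fun h1 => hne (by rw [← mul_eq_one_iff_inv_eq.mp h1,
    inv_eq_of_mul_eq_one_right hw.mul_self])
  obtain ⟨i, hi, hdesc⟩ := exists_rightDescent_of_mem_parabolic hy hy1
  have h1 := hw.length_mul_add_length' (mul_mem hy (simple_mem_parabolic hi))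
  have h2 := hw.length_mul_add_length' hy
  rw [← mul_assoc, ← mul_assoc, hw.mul_self, one_mul] at h1
  rw [← mul_assoc, hw.mul_self, one_mul] at h2
  have h3 := h i hi
  omega

theorem parabolicReflections_subset_of_forall_descent (hw : cs.IsLongest I w) {x : W}
    (h : ∀ i ∈ I, cs.length (x * cs.simple i) + 1 = cs.length x) :
    cs.parabolicReflections I ⊆ cs.rightInversions x := by
  obtain ⟨x₀, hx₀, u, hu, rfl⟩ := cs.exists_disjoint_mul_eq x I
  obtain rfl : u = w := hw.eq_of_forall_descent hu fun i hi => by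
    have := h i hi
    rw [mul_assoc, length_mul_of_disjoint hx₀ (mul_mem hu (simple_mem_parabolic hi)),
      length_mul_of_disjoint hx₀ hu] at this
    omega
  intro t ht
  rw [rightInversions_mul, Set.mem_symmDiff]
  refine .inl ⟨hw.rightInversions_eq ▸ ht, fun h' => Set.disjoint_left.mp hx₀ h' ?_⟩
  exact mul_mem (mul_mem hu ht.2) (inv_mem hu)

end IsLongest

variable (cs) in
theorem exists_eq_append_of_mem_rightInversions_prod {α : Type*} (f : α → W) {l : List α} {t : W}
    (ht : t ∈ cs.rightInversions (l.map f).prod) :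
    ∃ a x b, l = a ++ x :: b ∧
      (b.map f).prod * t * ((b.map f).prod)⁻¹ ∈ cs.rightInversions (f x) := by
  induction l with
  | nil => simp [rightInversions, IsRightInversion] at ht
  | cons x l ih =>
    rw [List.map_cons, List.prod_cons, rightInversions_mul, Set.mem_symmDiff] at ht
    rcases ht with ⟨ht, -⟩ | ⟨ht, -⟩
    · obtain ⟨a, y, b, rfl, hy⟩ := ih ht
      exact ⟨x :: a, y, b, rfl, hy⟩
    · exact ⟨[], x, l, rfl, ht⟩

variable (cs) in
structure IsFolding (P : Set (Set B)) (r : Set B → W) : Prop where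
  isLongest : ∀ I ∈ P, cs.IsLongest I (r I)
  admissible : ∀ w ∈ Subgroup.closure (r '' P), ∀ I ∈ P,
    (∀ i ∈ I, cs.length (w * cs.simple i) = cs.length w + 1) ∨
    (∀ i ∈ I, cs.length (w * cs.simple i) + 1 = cs.length w)

namespace IsFolding

variable {P : Set (Set B)} {r : Set B → W}

theorem mem_rightInversions_iff (hF : cs.IsFolding P r) {x : W}
    (hx : x ∈ Subgroup.closure (r '' P)) (hI : I ∈ P) {t t' : W}
    (ht : t ∈ cs.parabolicReflections I) (ht' : t' ∈ cs.parabolicReflections I) :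
    t ∈ cs.rightInversions x ↔ t' ∈ cs.rightInversions x := by
  rcases hF.admissible x hx I hI with hasc | hdesc
  · have h := Set.disjoint_left.mp (disjoint_rightInversions_of_forall_ascent hasc)
    exact iff_of_false (fun h' => h h' ht.2) (fun h' => h h' ht'.2)
  · have h := (hF.isLongest I hI).parabolicReflections_subset_of_forall_descent hdesc
    exact iff_of_true (h ht) (h ht')

theorem conj_mem_parabolic (hF : cs.IsFolding P r) {G : W} (hG : G ∈ Subgroup.closure (r '' P))
    {J : Set B} (hI : I ∈ P) (hJ : J ∈ P) {t₀ : W} (ht₀ : t₀ ∈ cs.parabolicReflections I)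
    (h : G * t₀ * G⁻¹ ∈ cs.rightInversions (r J)) {u : W} (hu : u ∈ cs.parabolic I) :
    G * u * G⁻¹ ∈ cs.parabolic J := by
  have hJG : r J * G ∈ Subgroup.closure (r '' P) :=
    mul_mem (Subgroup.subset_closure ⟨J, hJ, rfl⟩) hG
  have hsplit (t : W) : G * t * G⁻¹ ∈ cs.rightInversions (r J) ↔
      (t ∈ cs.rightInversions (r J * G) ↔ t ∉ cs.rightInversions G) := by
    rw [rightInversions_mul, Set.mem_symmDiff, Set.mem_preimage, MulAut.conj_apply]
    tauto
  have hconj (t : W) (ht : t ∈ cs.parabolicReflections I) :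
      G * t * G⁻¹ ∈ cs.rightInversions (r J) := by
    rw [hsplit] at h ⊢
    rwa [hF.mem_rightInversions_iff hJG hI ht ht₀, hF.mem_rightInversions_iff hG hI ht ht₀]
  have hle : cs.parabolic I ≤ (cs.parabolic J).comap (MulAut.conj G).toMonoidHom := by
    refine (Subgroup.closure_le _).mpr ?_
    rintro _ ⟨i, hi, rfl⟩
    exact rightInversions_subset_parabolic (hF.isLongest J hJ).1
      (hconj _ ⟨cs.isReflection_simple i, simple_mem_parabolic hi⟩)
  exact hle hu

theorem conj_eq_of_mem_parabolic (hF : cs.IsFolding P r) {G : W}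
    (hG : G ∈ Subgroup.closure (r '' P)) {J : Set B} (hI : I ∈ P) (hJ : J ∈ P) {i : B}
    (hi : i ∈ I) (h : G * r I * G⁻¹ ∈ cs.parabolic J) : G * r I * G⁻¹ = r J := by
  have hx : G * r I * G⁻¹ ∈ Subgroup.closure (r '' P) :=
    mul_mem (mul_mem hG (Subgroup.subset_closure ⟨I, hI, rfl⟩)) (inv_mem hG)
  refine (hF.admissible _ hx J hJ).elim (fun hasc => ?_)
    ((hF.isLongest J hJ).eq_of_forall_descent h)
  exfalso
  have h1 := length_mul_of_disjoint (disjoint_rightInversions_of_forall_ascent hasc) (inv_mem h)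
  rw [mul_inv_cancel, length_one, length_inv] at h1
  have hrI : r I = 1 := by
    simpa using cs.length_eq_zero_iff.mp (show cs.length (G * r I * G⁻¹) = 0 by omega)
  have := (hF.isLongest I hI).2 _ (simple_mem_parabolic (cs := cs) hi)
  rw [hrI, length_one, length_simple] at this
  omega

theorem forall_ascent_of_minimal (hF : cs.IsFolding P r) {l : List (Set B)}
    (hl : ∀ J ∈ l, J ∈ P) (hI : I ∈ P)
    (hmin : ∀ l' : List (Set B), (∀ J ∈ l', J ∈ P) →
      (l'.map r).prod = ((l ++ [I]).map r).prod → (l ++ [I]).length ≤ l'.length) :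
    ∀ i ∈ I, cs.length ((l.map r).prod * cs.simple i) = cs.length (l.map r).prod + 1 := by
  intro i hi
  refine (cs.length_mul_simple _ i).resolve_right fun hdesc => ?_
  have hinv : cs.simple i ∈ cs.rightInversions (l.map r).prod :=
    ⟨cs.isReflection_simple i, by omega⟩
  obtain ⟨a, J, b, rfl, hJb⟩ := cs.exists_eq_append_of_mem_rightInversions_prod r hinv
  have hJ : J ∈ P := hl J (by simp)
  have hG : (b.map r).prod ∈ Subgroup.closure (r '' P) :=
    Subgroup.list_prod_mem _ fun x hx => by
      obtain ⟨K, hK, rfl⟩ := List.mem_map.mp hx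
      exact Subgroup.subset_closure ⟨K, hl K (by simp [hK]), rfl⟩
  have heq := hF.conj_eq_of_mem_parabolic hG hI hJ hi (hF.conj_mem_parabolic hG hI hJ
    ⟨cs.isReflection_simple i, simple_mem_parabolic hi⟩ hJb (hF.isLongest I hI).1)
  -- `r J * G * r I = G` for `G` the product of `b`, so deleting `J` and `I` keeps the product
  have hshorter := hmin (a ++ b) (fun K hK => hl K (by simp at hK ⊢; tauto)) (by
    simp only [List.map_append, List.prod_append, List.map_cons, List.prod_cons, List.map_nil,
      List.prod_nil, mul_one, ← heq, mul_assoc, inv_mul_cancel_left, (hF.isLongest I hI).mul_self])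
  simp only [List.length_append, List.length_cons] at hshorter
  omega

end IsFolding

end CoxeterSystem

open CoxeterSystem in
theorem stmt_11_general {B W : Type*} [Group W] {M : CoxeterMatrix B} (cs : CoxeterSystem M W)
    (P : Set (Set B)) (r : Set B → W)
    (hlongest : ∀ I ∈ P, r I ∈ Subgroup.closure (cs.simple '' I) ∧
      ∀ u ∈ Subgroup.closure (cs.simple '' I), cs.length u ≤ cs.length (r I))
    (hadm : ∀ w ∈ Subgroup.closure (r '' P), ∀ I ∈ P,
      (∀ i ∈ I, cs.length (w * cs.simple i) = cs.length w + 1) ∨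
      (∀ i ∈ I, cs.length (w * cs.simple i) + 1 = cs.length w))
    (l : List (Set B)) (hl : ∀ I ∈ l, I ∈ P)
    (hred : ∀ l' : List (Set B), (∀ I ∈ l', I ∈ P) →
      (l'.map r).prod = (l.map r).prod → l.length ≤ l'.length) :
    cs.length (l.map r).prod = (l.map (fun I => cs.length (r I))).sum := by
  have hF : cs.IsFolding P r := ⟨hlongest, hadm⟩
  induction l using List.reverseRecOn with
  | nil => simp
  | append_singleton l I ih =>
    have hI : I ∈ P := hl I (by simp)
    have hlP : ∀ J ∈ l, J ∈ P := fun J hJ => hl J (by simp [hJ])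
    have hred' : ∀ l' : List (Set B), (∀ J ∈ l', J ∈ P) →
        (l'.map r).prod = (l.map r).prod → l.length ≤ l'.length := fun l' hl' hprod => by
      have := hred (l' ++ [I]) (by simpa [or_imp, forall_and] using ⟨hl', hI⟩) (by simp [hprod])
      simp only [List.length_append, List.length_singleton] at this
      omega
    have hasc := hF.forall_ascent_of_minimal hlP hI hred
    rw [List.map_append, List.prod_append, List.map_singleton, List.prod_singleton,
      length_mul_of_disjoint (disjoint_rightInversions_of_forall_ascent hasc) (hlongest I hI).1,
      ih hlP hred']
    simp

/-- Unfolding is additive on lengths: if `Ŝ` is an admissible partition of `S` (each part `I`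
generates a finite parabolic with longest element `r I`, and every element of the folding
subgroup `Ŵ = ⟨r I⟩` has uniform ascents/descents on each part), then for any word
`l = (I₁, …, I_k)` in the parts which is reduced (of minimal length among all words in the
generators `r I` with the same product), the ambient length of the product is
`ℓ(r I₁ ⋯ r I_k) = ∑ⱼ ℓ(r Iⱼ)`. -/
theorem stmt_11 {B W : Type*} [Group W] {M : CoxeterMatrix B} (cs : CoxeterSystem M W)
    (P : Set (Set B)) (hpart : ∀ b : B, ∃! I, I ∈ P ∧ b ∈ I)
    (r : Set B → W)
    (hfin : ∀ I ∈ P, (Subgroup.closure (cs.simple '' I) : Set W).Finite)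
    (hlongest : ∀ I ∈ P, r I ∈ Subgroup.closure (cs.simple '' I) ∧
      ∀ u ∈ Subgroup.closure (cs.simple '' I), cs.length u ≤ cs.length (r I))
    (hadm : ∀ w ∈ Subgroup.closure (r '' P), ∀ I ∈ P,
      (∀ i ∈ I, cs.length (w * cs.simple i) = cs.length w + 1) ∨
      (∀ i ∈ I, cs.length (w * cs.simple i) + 1 = cs.length w))
    (l : List (Set B)) (hl : ∀ I ∈ l, I ∈ P)
    (hred : ∀ l' : List (Set B), (∀ I ∈ l', I ∈ P) →
      (l'.map r).prod = (l.map r).prod → l.length ≤ l'.length) :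
    cs.length (l.map r).prod = (l.map (fun I => cs.length (r I))).sum :=
  stmt_11_general cs P r hlongest hadm l hl hred
end

section
/- For all n \ge 1, the polynomial identity (-q^3;q^2)_n \cdot [n]_{q^2}! = \prod_{k=1}^{2n+1} [k]_{(-1)^k q} holds in \mathbb{Z}[q]. -/
open Polynomial Finset

lemma qint_even (p : Polynomial ℤ) (m : ℕ) :
    qint p (2 * m) = (1 + p) * qint (p ^ 2) m := by
  induction m with
  | zero => simp [qint]
  | succ m ih =>
    have h : 2 * (m + 1) = (2 * m) + 1 + 1 := by ring
    rw [h]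
    simp only [qint, Finset.sum_range_succ] at *
    rw [ih]
    ring

lemma qint_neg_odd (p : Polynomial ℤ) (m : ℕ) :
    (1 + p) * qint (-p) (2 * m + 1) = 1 + p ^ (2 * m + 1) := by
  induction m with
  | zero => simp [qint]
  | succ m ih =>
    have h : 2 * (m + 1) + 1 = (2 * m + 1) + 1 + 1 := by ring
    rw [h]
    simp only [qint, Finset.sum_range_succ] at *
    have e1 : (-p) ^ (2 * m + 1) = -(p ^ (2 * m + 1)) := Odd.neg_pow ⟨m, by ring⟩ p
    have e2 : (-p) ^ (2 * m + 1 + 1) = p ^ (2 * m + 1 + 1) := Even.neg_pow ⟨m + 1, by ring⟩ p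
    rw [e1, e2]
    linear_combination ih

lemma key (n : ℕ) :
    (1 + X ^ (2 * n + 3)) * qint (X ^ 2) (n + 1) =
      qint X (2 * n + 2) * qint (-X) (2 * n + 3) := by
  have h1 : qint X (2 * n + 2) = (1 + X) * qint (X ^ 2) (n + 1) := by
    have := qint_even X (n + 1)
    rw [show 2 * (n + 1) = 2 * n + 2 by ring] at this
    exact this
  have h2 : (1 + X) * qint (-X) (2 * n + 3) = 1 + X ^ (2 * n + 3) := by
    have := qint_neg_odd X (n + 1)
    rw [show 2 * (n + 1) + 1 = 2 * n + 3 by ring] at this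
    exact this
  rw [h1, mul_assoc, mul_comm (qint (X ^ 2) (n + 1)), ← mul_assoc, h2]

/-- `(-q³;q²)_n ⋅ [n]_{q²}! = ∏_{k=1}^{2n+1} [k]_{(-1)^k q}` in `ℤ[q]`. -/
theorem stmt_18 (n : ℕ) (hn : 1 ≤ n) :
    (∏ k ∈ Finset.range n, (1 + X ^ (2 * k + 3))) *
        (∏ k ∈ Finset.Icc 1 n, qint (X ^ 2) k) =
      ∏ k ∈ Finset.Icc 1 (2 * n + 1), qint ((-1) ^ k * X) k := by
  induction n with
  | zero => omega
  | succ n ih =>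
    rcases Nat.eq_or_lt_of_le hn with h | h
    · -- n + 1 = 1
      have hn0 : n = 0 := by omega
      subst hn0
      simp [qint, Finset.prod_range_succ, Finset.sum_range_succ,
        show Finset.Icc 1 3 = {1, 2, 3} by decide, show Finset.Icc 1 1 = {1} by decide]
      ring
    · have hn1 : 1 ≤ n := by omega
      have ih := ih hn1
      rw [Finset.prod_range_succ, Finset.prod_Icc_succ_top (by omega : 1 ≤ n + 1),
        show 2 * (n + 1) + 1 = (2 * n + 1) + 1 + 1 by ring,
        Finset.prod_Icc_succ_top (by omega : 1 ≤ 2 * n + 1 + 1 + 1),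
        Finset.prod_Icc_succ_top (by omega : 1 ≤ 2 * n + 1 + 1), ← ih]
      have he : ((-1 : Polynomial ℤ)) ^ (2 * n + 1 + 1) = 1 :=
        Even.neg_one_pow ⟨n + 1, by ring⟩
      have ho : ((-1 : Polynomial ℤ)) ^ (2 * n + 1 + 1 + 1) = -1 :=
        Odd.neg_one_pow ⟨n + 1, by ring⟩
      rw [he, ho, one_mul, neg_one_mul]
      have hk := key n
      rw [show 2 * n + 2 = 2 * n + 1 + 1 by ring,
        show 2 * n + 3 = 2 * n + 1 + 1 + 1 by ring] at hk
      calc _ = ((∏ k ∈ Finset.range n, (1 + X ^ (2 * k + 3))) *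
            ∏ k ∈ Finset.Icc 1 n, qint (X ^ 2) k) *
            ((1 + X ^ (2 * n + 3)) * qint (X ^ 2) (n + 1)) := by ring
        _ = _ := by rw [hk]; ring
end
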